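/- arXiv:2112.12418 — 9 statements merged into one kernel-verified Lean document; each statement's English description precedes it below -/
import Mathlib

section
/- Let g be a finite-dimensional real Lie algebra with an almost complex structure J. If J is abelian, meaning [Jx, Jy] = [x, y] for all x, y ∈ g, then J is nilpotent: the ascending series g₀ᴶ = 0, gᵢᴶ = { X ∈ g : [X, g] ⊆ g_{i−1}ᴶ and [JX, g] ⊆ g_{i−1}ᴶ } satisfies g_kᴶ = g for some k > 0, provided g is a nilpotent Lie algebra. -/
/-! Abelianity together with `J² = -1` gives `[JX, Y] = -[X, JY]`, so an element of the
normalizer of `S` also has `[JX, g] ⊆ S`. Hence the `i`-th term of the upper central series lies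
in `g_iᴶ`, and the upper central series of a nilpotent Lie algebra reaches `g`. -/

section

variable {g : Type*} [LieRing g] [LieAlgebra ℝ g]

/-- One step of the J-ascending series:
`Jstep J S = { X : [X,g] ⊆ S and [JX,g] ⊆ S }`. -/
def Jstep (J : g →ₗ[ℝ] g) (S : Submodule ℝ g) : Submodule ℝ g where
  carrier := {X | (∀ Y, ⁅X, Y⁆ ∈ S) ∧ (∀ Y, ⁅J X, Y⁆ ∈ S)}
  add_mem' := by
    intro a b ha hb
    refine ⟨fun Y => ?_, fun Y => ?_⟩
    · simpa [add_lie] using S.add_mem (ha.1 Y) (hb.1 Y)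
    · simp only [map_add, add_lie]
      exact S.add_mem (ha.2 Y) (hb.2 Y)
  zero_mem' := by
    refine ⟨fun Y => ?_, fun Y => ?_⟩ <;> simp [zero_lie]
  smul_mem' := by
    intro c x hx
    refine ⟨fun Y => ?_, fun Y => ?_⟩
    · simpa [smul_lie] using S.smul_mem c (hx.1 Y)
    · simp only [map_smul, smul_lie]
      exact S.smul_mem c (hx.2 Y)

/-- The J-ascending series g₀ᴶ = 0, gᵢᴶ = { X : [X,g] ⊆ g_{i−1}ᴶ, [JX,g] ⊆ g_{i−1}ᴶ }. -/
def Jser (J : g →ₗ[ℝ] g) : ℕ → Submodule ℝ g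
  | 0 => ⊥
  | i + 1 => Jstep J (Jser J i)

theorem lie_map_left_eq_neg_lie_map_right {L F : Type*} [LieRing L] [FunLike F L L]
    [AddMonoidHomClass F L L] {J : F} (hJ2 : ∀ x, J (J x) = -x)
    (habelian : ∀ x y : L, ⁅J x, J y⁆ = ⁅x, y⁆) (x y : L) :
    ⁅J x, y⁆ = -⁅x, J y⁆ :=
  calc ⁅J x, y⁆ = ⁅J x, J (-J y)⁆ := by rw [map_neg, hJ2, neg_neg]
    _ = -⁅x, J y⁆ := by rw [habelian, lie_neg]

section AbelianComplexStructure

variable {J : g →ₗ[ℝ] g}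

theorem Jstep_mono {S T : Submodule ℝ g} (h : S ≤ T) : Jstep J S ≤ Jstep J T :=
  fun _ hX => ⟨fun Y => h (hX.1 Y), fun Y => h (hX.2 Y)⟩

variable (hJ2 : ∀ x, J (J x) = -x) (habelian : ∀ x y : g, ⁅J x, J y⁆ = ⁅x, y⁆)
include hJ2 habelian

theorem normalizer_le_Jstep (N : LieSubmodule ℝ g g) :
    N.normalizer.toSubmodule ≤ Jstep J N.toSubmodule := by
  intro x hx
  rw [LieSubmodule.mem_toSubmodule, LieSubmodule.mem_normalizer] at hx
  refine ⟨fun y => ?_, fun y => ?_⟩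
  · rw [← lie_skew]
    exact N.neg_mem (hx y)
  · rw [lie_map_left_eq_neg_lie_map_right hJ2 habelian, ← lie_skew, neg_neg]
    exact hx (J y)

theorem ucs_le_Jser (i : ℕ) :
    ((⊥ : LieSubmodule ℝ g g).ucs i).toSubmodule ≤ Jser J i := by
  induction i with
  | zero => simp [Jser]
  | succ i ih =>
    rw [LieSubmodule.ucs_succ]
    exact (normalizer_le_Jstep hJ2 habelian _).trans (Jstep_mono ih)

end AbelianComplexStructure

theorem stmt_2_general [LieRing.IsNilpotent g]
    (J : g →ₗ[ℝ] g) (hJ2 : ∀ x, J (J x) = -x)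
    (habelian : ∀ x y : g, ⁅J x, J y⁆ = ⁅x, y⁆) :
    ∃ k : ℕ, 0 < k ∧ Jser J k = ⊤ := by
  obtain ⟨k, hk⟩ := (LieModule.isNilpotent_iff_exists_ucs_eq_top ℝ).mp ‹LieRing.IsNilpotent g›
  refine ⟨k + 1, k.succ_pos, eq_top_iff.mpr ?_⟩
  calc (⊤ : Submodule ℝ g) = ((⊥ : LieSubmodule ℝ g g).ucs k).toSubmodule := by simp [hk]
    _ ≤ ((⊥ : LieSubmodule ℝ g g).ucs (k + 1)).toSubmodule := by
      rw [LieSubmodule.ucs_succ, LieSubmodule.toSubmodule_le_toSubmodule]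
      exact LieSubmodule.le_normalizer _
    _ ≤ Jser J (k + 1) := ucs_le_Jser hJ2 habelian (k + 1)

/-- on a finite-dimensional nilpotent real Lie algebra, any abelian
almost complex structure J ([Jx,Jy] = [x,y]) is nilpotent: g_kᴶ = g for some k > 0. -/
theorem stmt_2 [FiniteDimensional ℝ g] [LieRing.IsNilpotent g]
    (J : g →ₗ[ℝ] g) (hJ2 : ∀ x, J (J x) = -x)
    (habelian : ∀ x y : g, ⁅J x, J y⁆ = ⁅x, y⁆) :
    ∃ k : ℕ, 0 < k ∧ Jser J k = ⊤ :=
  stmt_2_general J hJ2 habelian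

end
end

section
/- Let g be a finite-dimensional real nilpotent Lie algebra with an almost complex structure J that is bi-invariant, i.e., J[x,y] = [Jx, y] for all x, y ∈ g. Then J is nilpotent, i.e., the ascending series g₀ᴶ = 0, gᵢᴶ = { X : [X,g] ⊆ g_{i−1}ᴶ, [JX,g] ⊆ g_{i−1}ᴶ } eventually equals g. -/
/-!
Each term of the J-ascending series is `J`-stable: if `[X, g]` and `[JX, g]` lie in the previous
term, so do `[JX, g]` and `[J(JX), g] = -[X, g]`. Since `[JX, Y] = J[X, Y]`, the second condition
defining the series is then implied by the first, so the series contains the upper central series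
of `g`, which reaches `g` because `g` is nilpotent.
-/

section

variable {g : Type*} [LieRing g] [LieAlgebra ℝ g]

theorem apply_mem_Jser (J : g →ₗ[ℝ] g) (hJ2 : ∀ x, J (J x) = -x) :
    ∀ {i : ℕ} {x : g}, x ∈ Jser J i → J x ∈ Jser J i
  | 0, x, hx => by
    rw [Jser, Submodule.mem_bot] at hx ⊢
    rw [hx, map_zero]
  | i + 1, _, hx => ⟨hx.2, fun Y => by
    rw [hJ2, neg_lie]
    exact (Jser J i).neg_mem (hx.1 Y)⟩

theorem ucs_le_Jser_s3 (J : g →ₗ[ℝ] g) (hJ2 : ∀ x, J (J x) = -x)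
    (hbiinv : ∀ x y : g, J ⁅x, y⁆ = ⁅J x, y⁆) :
    ∀ k : ℕ, ((⊥ : LieSubmodule ℝ g g).ucs k).toSubmodule ≤ Jser J k
  | 0 => le_of_eq rfl
  | k + 1 => fun x hx => by
    rw [LieSubmodule.mem_toSubmodule, LieSubmodule.ucs_succ, LieSubmodule.mem_normalizer] at hx
    have hxY : ∀ Y, ⁅x, Y⁆ ∈ Jser J k := fun Y => by
      rw [← lie_skew]
      exact (Jser J k).neg_mem (ucs_le_Jser_s3 J hJ2 hbiinv k (hx Y))
    exact ⟨hxY, fun Y => hbiinv x Y ▸ apply_mem_Jser J hJ2 (hxY Y)⟩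

theorem stmt_3_general [LieRing.IsNilpotent g]
    (J : g →ₗ[ℝ] g) (hJ2 : ∀ x, J (J x) = -x)
    (hbiinv : ∀ x y : g, J ⁅x, y⁆ = ⁅J x, y⁆) :
    ∃ k : ℕ, 0 < k ∧ Jser J k = ⊤ := by
  obtain ⟨k, hk⟩ :=
    (LieModule.isNilpotent_iff_exists_ucs_eq_top ℝ (L := g) (M := g)).mp inferInstance
  have hk_succ : (⊥ : LieSubmodule ℝ g g).ucs (k + 1) = ⊤ := by
    rw [LieSubmodule.ucs_succ, hk]
    exact top_unique (LieSubmodule.le_normalizer ⊤)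
  refine ⟨k + 1, k.succ_pos, top_unique ?_⟩
  simpa only [hk_succ, LieSubmodule.top_toSubmodule] using ucs_le_Jser_s3 J hJ2 hbiinv (k + 1)

/-- on a finite-dimensional nilpotent real Lie algebra, any bi-invariant
almost complex structure J (J[x,y] = [Jx,y]) is nilpotent: g_kᴶ = g for some k > 0. -/
theorem stmt_3 [FiniteDimensional ℝ g] [LieRing.IsNilpotent g]
    (J : g →ₗ[ℝ] g) (hJ2 : ∀ x, J (J x) = -x)
    (hbiinv : ∀ x y : g, J ⁅x, y⁆ = ⁅J x, y⁆) :
    ∃ k : ℕ, 0 < k ∧ Jser J k = ⊤ :=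
  stmt_3_general J hJ2 hbiinv

end
end

section
/- In the differential graded algebra with degree-one generators φ¹,φ²,φ³ and conjugates, and differential dφ¹ = dφ² = 0, dφ³ = φ¹∧φ̄² (extended by conjugation and the Leibniz rule), the Hermitian form ω = i(φ¹∧φ̄¹ + φ²∧φ̄² + φ³∧φ̄³) satisfies ω∧ω = 2·(−φ¹∧φ̄¹∧φ²∧φ̄² − φ¹∧φ̄¹∧φ³∧φ̄³ − φ²∧φ̄²∧φ³∧φ̄³) and d(ω∧ω) = 0, i.e., ω is a balanced structure. -/
set_option maxHeartbeats 2000000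

noncomputable section

abbrev Vsp : Type := (ℕ ⊕ ℕ) →₀ ℂ
abbrev ExtA : Type := ExteriorAlgebra ℂ Vsp

def φ (j : ℕ) : ExtA := ExteriorAlgebra.ι ℂ (Finsupp.single (Sum.inl j) 1)
def φb (j : ℕ) : ExtA := ExteriorAlgebra.ι ℂ (Finsupp.single (Sum.inr j) 1)

local notation "X" => ExteriorAlgebra.ι ℂ (M := Vsp)

private lemma sw' (v w : Vsp) : X v * X w = -(X w * X v) := by
  have := ExteriorAlgebra.ι_add_mul_swap (R := ℂ) v w
  linear_combination (norm := noncomm_ring) this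

private lemma sq0' (v : Vsp) : X v * X v = 0 := ExteriorAlgebra.ι_sq_zero v

private lemma pull' (u v : Vsp) (r : ExtA) : X v * (X u * r) = -(X u * (X v * r)) := by
  rw [← mul_assoc, sw' v u, neg_mul, mul_assoc]

private lemma kill' (u : Vsp) (r : ExtA) : X u * (X u * r) = 0 := by
  rw [← mul_assoc, sq0', zero_mul]

private lemma sq2' (v w : Vsp) : (X v * X w) * (X v * X w) = 0 := by
  rw [mul_assoc, pull' v w, mul_neg, kill', neg_zero]

private lemma comm2' (v w x y : Vsp) :
    (X v * X w) * (X x * X y) = (X x * X y) * (X v * X w) := by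
  have h1 : X w * (X x * X y) = (X x * X y) * X w := by
    rw [← mul_assoc, sw' w x, neg_mul, mul_assoc, sw' w y, mul_neg, neg_neg, ← mul_assoc]
  have h2 : X v * (X x * X y) = (X x * X y) * X v := by
    rw [← mul_assoc, sw' v x, neg_mul, mul_assoc, sw' v y, mul_neg, neg_neg, ← mul_assoc]
  rw [mul_assoc, h1, ← mul_assoc, h2, mul_assoc]

/-- with the same differential (dφ¹ = dφ² = 0, dφ³ = φ¹∧φ̄²), the Hermitian
form ω = i(φ¹φ̄¹ + φ²φ̄² + φ³φ̄³) satisfies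
ω∧ω = 2(−φ¹φ̄¹φ²φ̄² − φ¹φ̄¹φ³φ̄³ − φ²φ̄²φ³φ̄³) and d(ω∧ω) = 0 (ω is balanced). -/
theorem stmt_6 (d : ExtA →ₗ[ℂ] ExtA)
    (hleib : ∀ (v : Vsp) (y : ExtA),
      d (ExteriorAlgebra.ι ℂ v * y)
        = d (ExteriorAlgebra.ι ℂ v) * y - ExteriorAlgebra.ι ℂ v * d y)
    (h1 : d (φ 1) = 0) (h2 : d (φ 2) = 0)
    (hb1 : d (φb 1) = 0) (hb2 : d (φb 2) = 0)
    (h3 : d (φ 3) = φ 1 * φb 2) (hb3 : d (φb 3) = φb 1 * φ 2) :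
    (Complex.I • (φ 1 * φb 1 + φ 2 * φb 2 + φ 3 * φb 3))
        * (Complex.I • (φ 1 * φb 1 + φ 2 * φb 2 + φ 3 * φb 3))
      = (2 : ℂ) • (-(φ 1 * φb 1 * φ 2 * φb 2) - φ 1 * φb 1 * φ 3 * φb 3
          - φ 2 * φb 2 * φ 3 * φb 3) ∧
    d ((Complex.I • (φ 1 * φb 1 + φ 2 * φb 2 + φ 3 * φb 3))
        * (Complex.I • (φ 1 * φb 1 + φ 2 * φb 2 + φ 3 * φb 3))) = 0 := by
  have lf : ∀ (j : ℕ) (y : ExtA), d (φ j * y) = d (φ j) * y - φ j * d y :=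
    fun j y => hleib _ y
  have lfb : ∀ (j : ℕ) (y : ExtA), d (φb j * y) = d (φb j) * y - φb j * d y :=
    fun j y => hleib _ y
  set a := φ 1 * φb 1 with ha
  set b := φ 2 * φb 2 with hb
  set c := φ 3 * φb 3 with hc
  have haa : a * a = 0 := sq2' _ _
  have hbb : b * b = 0 := sq2' _ _
  have hcc : c * c = 0 := sq2' _ _
  have hab : b * a = a * b := comm2' _ _ _ _
  have hac : c * a = a * c := comm2' _ _ _ _
  have hbc : c * b = b * c := comm2' _ _ _ _
  have r1 : a * φ 2 * φb 2 = a * b := by rw [hb, mul_assoc]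
  have r2 : a * φ 3 * φb 3 = a * c := by rw [hc, mul_assoc]
  have r3 : b * φ 3 * φb 3 = b * c := by rw [hc, mul_assoc]
  have part1 : (Complex.I • (a + b + c)) * (Complex.I • (a + b + c))
      = (2 : ℂ) • (-(a * φ 2 * φb 2) - a * φ 3 * φb 3 - b * φ 3 * φb 3) := by
    have expand : (Complex.I • (a + b + c)) * (Complex.I • (a + b + c))
        = (Complex.I * Complex.I) • ((a+b+c) * (a+b+c)) := by
      rw [smul_mul_smul_comm]
    have hs : (a+b+c)*(a+b+c) = (2:ℂ) • (a*b + a*c + b*c) := by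
      simp only [mul_add, add_mul, haa, hbb, hcc, hab, hac, hbc, two_smul]
      abel
    rw [r1, r2, r3, expand, Complex.I_mul_I, hs, smul_smul]
    rw [show (-1 : ℂ) * 2 = (2:ℂ) * (-1) by ring, ← smul_smul]
    congr 1
    simp only [neg_smul, one_smul]
    abel
  refine ⟨part1, ?_⟩
  rw [part1, map_smul, map_sub, map_sub, map_neg]
  have e1 : a * φ 2 * φb 2 = φ 1 * (φb 1 * (φ 2 * φb 2)) := by
    rw [ha, mul_assoc, mul_assoc]
  have e2 : a * φ 3 * φb 3 = φ 1 * (φb 1 * (φ 3 * φb 3)) := by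
    rw [ha, mul_assoc, mul_assoc]
  have e3 : b * φ 3 * φb 3 = φ 2 * (φb 2 * (φ 3 * φb 3)) := by
    rw [hb, mul_assoc, mul_assoc]
  have d1 : d (a * φ 2 * φb 2) = 0 := by
    rw [e1, lf, lfb, lf, h1, h2, hb1, hb2]
    simp
  have d2 : d (a * φ 3 * φb 3) = 0 := by
    rw [e2, lf, lfb, lf, h1, hb1, h3, hb3]
    simp only [zero_mul, zero_sub, mul_neg, mul_sub, neg_neg, neg_sub, φ, φb, mul_assoc]
    rw [pull' (Finsupp.single (Sum.inl 1) 1) (Finsupp.single (Sum.inr 1) 1),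
      pull' (Finsupp.single (Sum.inr 1) 1) (Finsupp.single (Sum.inl 3) 1)]
    simp only [mul_neg, kill', neg_zero, mul_zero, sub_zero, sub_self]
  have d3 : d (b * φ 3 * φb 3) = 0 := by
    rw [e3, lf, lfb, lf, h2, hb2, h3, hb3]
    simp only [zero_mul, zero_sub, mul_neg, mul_sub, neg_neg, neg_sub, φ, φb, mul_assoc]
    rw [pull' (Finsupp.single (Sum.inl 1) 1) (Finsupp.single (Sum.inr 2) 1)]
    rw [sw' (Finsupp.single (Sum.inr 1) 1) (Finsupp.single (Sum.inl 2) 1)]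
    simp only [mul_neg, neg_neg]
    rw [pull' (Finsupp.single (Sum.inl 2) 1) (Finsupp.single (Sum.inl 3) 1)]
    simp only [mul_neg, neg_neg]
    rw [pull' (Finsupp.single (Sum.inl 2) 1) (Finsupp.single (Sum.inr 2) 1)]
    simp only [mul_neg, neg_neg, kill', neg_zero, mul_zero, sub_self, sub_zero]
  rw [d1, d2, d3]
  simp

end
end

section
/- Let A be the differential graded algebra with degree-one generators φ¹,…,φ⁴ and conjugates, and differential dφ¹ = 0, dφ² = dφ³ = dφ⁴ = φ¹∧φ̄¹ (extended by conjugation and the Leibniz rule; note φ¹∧φ̄¹ is fixed up to sign by conjugation so d is well-defined with dφ̄ʲ = conjugate of dφʲ). Then the (2,2)-form Ω := −φ^{1}∧φ̄^{1}∧φ^{2}∧φ̄^{2} − φ^{1}∧φ̄^{1}∧φ^{3}∧φ̄^{3} − φ^{1}∧φ̄^{1}∧φ^{4}∧φ̄^{4} − φ^{2}∧φ̄^{2}∧φ^{3}∧φ̄^{3} − φ^{2}∧φ̄^{2}∧φ^{4}∧φ̄^{4} − φ^{3}∧φ̄^{3}∧φ^{4}∧φ̄^{4} + φ^{2}∧φ̄^{2}∧φ^{3}∧φ̄^{4}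 + φ^{2}∧φ̄^{2}∧φ^{4}∧φ̄^{3} + φ^{2}∧φ̄^{4}∧φ^{3}∧φ̄^{3} + φ^{4}∧φ̄^{2}∧φ^{3}∧φ̄^{3} + φ^{2}∧φ̄^{3}∧φ^{4}∧φ̄^{4} + φ^{3}∧φ̄^{2}∧φ^{4}∧φ̄^{4} satisfies dΩ = 0. -/
set_option maxHeartbeats 2000000

noncomputable section

private lemma sw (a b : Vsp) :
    ExteriorAlgebra.ι ℂ a * ExteriorAlgebra.ι ℂ b
      = -(ExteriorAlgebra.ι ℂ b * ExteriorAlgebra.ι ℂ a) := by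
  exact eq_neg_of_add_eq_zero_left (ExteriorAlgebra.ι_add_mul_swap a b)

private lemma sw'_s7 (a b : Vsp) (x : ExtA) :
    ExteriorAlgebra.ι ℂ a * (ExteriorAlgebra.ι ℂ b * x)
      = -(ExteriorAlgebra.ι ℂ b * (ExteriorAlgebra.ι ℂ a * x)) := by
  rw [← mul_assoc, sw, neg_mul, mul_assoc]

private lemma sq0 (a : Vsp) :
    ExteriorAlgebra.ι ℂ a * ExteriorAlgebra.ι ℂ a = 0 :=
  ExteriorAlgebra.ι_sq_zero a

private lemma sq0'_s7 (a : Vsp) (x : ExtA) :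
    ExteriorAlgebra.ι ℂ a * (ExteriorAlgebra.ι ℂ a * x) = 0 := by
  rw [← mul_assoc, sq0, zero_mul]

/-- in the CE algebra with dφ¹ = dφ̄¹ = 0 and dφʲ = dφ̄ʲ = φ¹∧φ̄¹ for
j = 2,3,4, the given (2,2)-form Ω is d-closed. -/
theorem stmt_7 (d : ExtA →ₗ[ℂ] ExtA)
    (hleib : ∀ (v : Vsp) (y : ExtA),
      d (ExteriorAlgebra.ι ℂ v * y)
        = d (ExteriorAlgebra.ι ℂ v) * y - ExteriorAlgebra.ι ℂ v * d y)
    (h1 : d (φ 1) = 0) (hb1 : d (φb 1) = 0)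
    (h : ∀ j, 2 ≤ j → j ≤ 4 → d (φ j) = φ 1 * φb 1 ∧ d (φb j) = φ 1 * φb 1) :
    d (-(φ 1 * φb 1 * φ 2 * φb 2) - φ 1 * φb 1 * φ 3 * φb 3 - φ 1 * φb 1 * φ 4 * φb 4
        - φ 2 * φb 2 * φ 3 * φb 3 - φ 2 * φb 2 * φ 4 * φb 4 - φ 3 * φb 3 * φ 4 * φb 4
        + φ 2 * φb 2 * φ 3 * φb 4 + φ 2 * φb 2 * φ 4 * φb 3
        + φ 2 * φb 4 * φ 3 * φb 3 + φ 4 * φb 2 * φ 3 * φb 3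
        + φ 2 * φb 3 * φ 4 * φb 4 + φ 3 * φb 2 * φ 4 * φb 4) = 0 := by
  obtain ⟨h2, hb2⟩ := h 2 (by norm_num) (by norm_num)
  obtain ⟨h3, hb3⟩ := h 3 (by norm_num) (by norm_num)
  obtain ⟨h4, hb4⟩ := h 4 (by norm_num) (by norm_num)
  simp only [φ, φb] at h1 hb1 h2 hb2 h3 hb3 h4 hb4 ⊢
  simp only [map_neg, map_sub, map_add, mul_assoc, hleib, h1, hb1, h2, hb2, h3, hb3, h4, hb4]
  simp only [mul_assoc, mul_neg, neg_mul, mul_zero, zero_mul, mul_sub, sub_mul, mul_one,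
    sq0 (Finsupp.single (Sum.inl 1) 1),
    sq0'_s7 (Finsupp.single (Sum.inl 1) 1),
    sq0 (Finsupp.single (Sum.inr 1) 1),
    sq0'_s7 (Finsupp.single (Sum.inr 1) 1),
    sq0 (Finsupp.single (Sum.inl 2) 1),
    sq0'_s7 (Finsupp.single (Sum.inl 2) 1),
    sq0 (Finsupp.single (Sum.inr 2) 1),
    sq0'_s7 (Finsupp.single (Sum.inr 2) 1),
    sq0 (Finsupp.single (Sum.inl 3) 1),
    sq0'_s7 (Finsupp.single (Sum.inl 3) 1),
    sq0 (Finsupp.single (Sum.inr 3) 1),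
    sq0'_s7 (Finsupp.single (Sum.inr 3) 1),
    sq0 (Finsupp.single (Sum.inl 4) 1),
    sq0'_s7 (Finsupp.single (Sum.inl 4) 1),
    sq0 (Finsupp.single (Sum.inr 4) 1),
    sq0'_s7 (Finsupp.single (Sum.inr 4) 1),
    sw (Finsupp.single (Sum.inr 1) 1) (Finsupp.single (Sum.inl 1) 1),
    sw'_s7 (Finsupp.single (Sum.inr 1) 1) (Finsupp.single (Sum.inl 1) 1),
    sw (Finsupp.single (Sum.inl 2) 1) (Finsupp.single (Sum.inl 1) 1),
    sw'_s7 (Finsupp.single (Sum.inl 2) 1) (Finsupp.single (Sum.inl 1) 1),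
    sw (Finsupp.single (Sum.inl 2) 1) (Finsupp.single (Sum.inr 1) 1),
    sw'_s7 (Finsupp.single (Sum.inl 2) 1) (Finsupp.single (Sum.inr 1) 1),
    sw (Finsupp.single (Sum.inr 2) 1) (Finsupp.single (Sum.inl 1) 1),
    sw'_s7 (Finsupp.single (Sum.inr 2) 1) (Finsupp.single (Sum.inl 1) 1),
    sw (Finsupp.single (Sum.inr 2) 1) (Finsupp.single (Sum.inr 1) 1),
    sw'_s7 (Finsupp.single (Sum.inr 2) 1) (Finsupp.single (Sum.inr 1) 1),
    sw (Finsupp.single (Sum.inr 2) 1) (Finsupp.single (Sum.inl 2) 1),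
    sw'_s7 (Finsupp.single (Sum.inr 2) 1) (Finsupp.single (Sum.inl 2) 1),
    sw (Finsupp.single (Sum.inl 3) 1) (Finsupp.single (Sum.inl 1) 1),
    sw'_s7 (Finsupp.single (Sum.inl 3) 1) (Finsupp.single (Sum.inl 1) 1),
    sw (Finsupp.single (Sum.inl 3) 1) (Finsupp.single (Sum.inr 1) 1),
    sw'_s7 (Finsupp.single (Sum.inl 3) 1) (Finsupp.single (Sum.inr 1) 1),
    sw (Finsupp.single (Sum.inl 3) 1) (Finsupp.single (Sum.inl 2) 1),
    sw'_s7 (Finsupp.single (Sum.inl 3) 1) (Finsupp.single (Sum.inl 2) 1),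
    sw (Finsupp.single (Sum.inl 3) 1) (Finsupp.single (Sum.inr 2) 1),
    sw'_s7 (Finsupp.single (Sum.inl 3) 1) (Finsupp.single (Sum.inr 2) 1),
    sw (Finsupp.single (Sum.inr 3) 1) (Finsupp.single (Sum.inl 1) 1),
    sw'_s7 (Finsupp.single (Sum.inr 3) 1) (Finsupp.single (Sum.inl 1) 1),
    sw (Finsupp.single (Sum.inr 3) 1) (Finsupp.single (Sum.inr 1) 1),
    sw'_s7 (Finsupp.single (Sum.inr 3) 1) (Finsupp.single (Sum.inr 1) 1),
    sw (Finsupp.single (Sum.inr 3) 1) (Finsupp.single (Sum.inl 2) 1),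
    sw'_s7 (Finsupp.single (Sum.inr 3) 1) (Finsupp.single (Sum.inl 2) 1),
    sw (Finsupp.single (Sum.inr 3) 1) (Finsupp.single (Sum.inr 2) 1),
    sw'_s7 (Finsupp.single (Sum.inr 3) 1) (Finsupp.single (Sum.inr 2) 1),
    sw (Finsupp.single (Sum.inr 3) 1) (Finsupp.single (Sum.inl 3) 1),
    sw'_s7 (Finsupp.single (Sum.inr 3) 1) (Finsupp.single (Sum.inl 3) 1),
    sw (Finsupp.single (Sum.inl 4) 1) (Finsupp.single (Sum.inl 1) 1),
    sw'_s7 (Finsupp.single (Sum.inl 4) 1) (Finsupp.single (Sum.inl 1) 1),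
    sw (Finsupp.single (Sum.inl 4) 1) (Finsupp.single (Sum.inr 1) 1),
    sw'_s7 (Finsupp.single (Sum.inl 4) 1) (Finsupp.single (Sum.inr 1) 1),
    sw (Finsupp.single (Sum.inl 4) 1) (Finsupp.single (Sum.inl 2) 1),
    sw'_s7 (Finsupp.single (Sum.inl 4) 1) (Finsupp.single (Sum.inl 2) 1),
    sw (Finsupp.single (Sum.inl 4) 1) (Finsupp.single (Sum.inr 2) 1),
    sw'_s7 (Finsupp.single (Sum.inl 4) 1) (Finsupp.single (Sum.inr 2) 1),
    sw (Finsupp.single (Sum.inl 4) 1) (Finsupp.single (Sum.inl 3) 1),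
    sw'_s7 (Finsupp.single (Sum.inl 4) 1) (Finsupp.single (Sum.inl 3) 1),
    sw (Finsupp.single (Sum.inl 4) 1) (Finsupp.single (Sum.inr 3) 1),
    sw'_s7 (Finsupp.single (Sum.inl 4) 1) (Finsupp.single (Sum.inr 3) 1),
    sw (Finsupp.single (Sum.inr 4) 1) (Finsupp.single (Sum.inl 1) 1),
    sw'_s7 (Finsupp.single (Sum.inr 4) 1) (Finsupp.single (Sum.inl 1) 1),
    sw (Finsupp.single (Sum.inr 4) 1) (Finsupp.single (Sum.inr 1) 1),
    sw'_s7 (Finsupp.single (Sum.inr 4) 1) (Finsupp.single (Sum.inr 1) 1),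
    sw (Finsupp.single (Sum.inr 4) 1) (Finsupp.single (Sum.inl 2) 1),
    sw'_s7 (Finsupp.single (Sum.inr 4) 1) (Finsupp.single (Sum.inl 2) 1),
    sw (Finsupp.single (Sum.inr 4) 1) (Finsupp.single (Sum.inr 2) 1),
    sw'_s7 (Finsupp.single (Sum.inr 4) 1) (Finsupp.single (Sum.inr 2) 1),
    sw (Finsupp.single (Sum.inr 4) 1) (Finsupp.single (Sum.inl 3) 1),
    sw'_s7 (Finsupp.single (Sum.inr 4) 1) (Finsupp.single (Sum.inl 3) 1),
    sw (Finsupp.single (Sum.inr 4) 1) (Finsupp.single (Sum.inr 3) 1),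
    sw'_s7 (Finsupp.single (Sum.inr 4) 1) (Finsupp.single (Sum.inr 3) 1),
    sw (Finsupp.single (Sum.inr 4) 1) (Finsupp.single (Sum.inl 4) 1),
    sw'_s7 (Finsupp.single (Sum.inr 4) 1) (Finsupp.single (Sum.inl 4) 1),
    neg_neg, neg_zero, sub_zero, zero_sub, add_zero, zero_add, mul_zero, zero_mul]
  abel

end
end

section
/- In the Chevalley–Eilenberg algebra of the Bigalke–Rollenske nilmanifold X^{4n−2} (n ≥ 2), with degree-one generators φ¹,…,φ^{4n−2} and conjugates and differential given by dφʲ = 0 for 1 ≤ j < 3n−1, dφ^{3n−1} = φ^{2n}∧φ̄ⁿ, and dφʲ = φ^{j−3n+1}∧φ^{j−2n+1} + φ^{j−2n}∧φ̄^{j−n} for 3n ≤ j ≤ 4n−2 (extended by conjugation), the (2·(4n−3))-form ω^{4n−3}, where ω = (i/2)·Σ_{j=1}^{4n−2} φʲ∧φ̄ʲ, satisfies d(ω^{4n−3}) = 0. -/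
set_option maxHeartbeats 1000000

noncomputable section

open ExteriorAlgebra

local notation "ε" => ExteriorAlgebra.ι ℂ (M := Vsp)

def pl (j : ℕ) : Vsp := Finsupp.single (Sum.inl j) 1
def pr (j : ℕ) : Vsp := Finsupp.single (Sum.inr j) 1

lemma φ_def (j : ℕ) : φ j = ε (pl j) := rfl
lemma φb_def (j : ℕ) : φb j = ε (pr j) := rfl

lemma swap (u v : Vsp) : ε u * ε v = -(ε v * ε u) :=
  eq_neg_of_add_eq_zero_left (ι_add_mul_swap u v)

lemma sq0_s8 (u : Vsp) : ε u * ε u = 0 := ι_sq_zero u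

lemma pair_comm_ι (u v w : Vsp) : (ε u * ε v) * ε w = ε w * (ε u * ε v) := by
  calc (ε u * ε v) * ε w = ε u * (ε v * ε w) := by rw [mul_assoc]
    _ = ε u * (-(ε w * ε v)) := by rw [swap v w]
    _ = -(ε u * ε w) * ε v := by noncomm_ring
    _ = -(-(ε w * ε u)) * ε v := by rw [swap u w]
    _ = ε w * (ε u * ε v) := by noncomm_ring

lemma pair_comm_pair (u v a b : Vsp) : Commute (ε u * ε v) (ε a * ε b) := by
  show _ = _
  calc (ε u * ε v) * (ε a * ε b) = ((ε u * ε v) * ε a) * ε b := (mul_assoc _ _ _).symm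
    _ = (ε a * (ε u * ε v)) * ε b := by rw [pair_comm_ι]
    _ = ε a * ((ε u * ε v) * ε b) := by rw [mul_assoc]
    _ = ε a * (ε b * (ε u * ε v)) := by rw [pair_comm_ι]
    _ = (ε a * ε b) * (ε u * ε v) := by rw [← mul_assoc]

lemma ι_comm_pair (w u v : Vsp) : Commute (ε w) (ε u * ε v) :=
  (pair_comm_ι u v w).symm

lemma pair_comm_triple (a b c u v : Vsp) : Commute (ε a * ε b * ε c) (ε u * ε v) :=
  Commute.mul_left (Commute.mul_left (ι_comm_pair a u v) (ι_comm_pair b u v))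
    (ι_comm_pair c u v)

lemma quadA (a b c : Vsp) : ε a * ε b * ε c * ε a = 0 := by
  calc ε a * ε b * ε c * ε a = ε a * ε b * (ε c * ε a) := by rw [mul_assoc]
    _ = ε a * ε b * (-(ε a * ε c)) := by rw [swap c a]
    _ = -(ε a * (ε b * ε a)) * ε c := by noncomm_ring
    _ = -(ε a * (-(ε a * ε b))) * ε c := by rw [swap b a]
    _ = (ε a * ε a) * ε b * ε c := by noncomm_ring
    _ = 0 := by rw [sq0_s8]; noncomm_ring

lemma quadB (a b c : Vsp) : ε a * ε b * ε c * ε b = 0 := by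
  calc ε a * ε b * ε c * ε b = ε a * (ε b * (ε c * ε b)) := by noncomm_ring
    _ = ε a * (ε b * (-(ε b * ε c))) := by rw [swap c b]
    _ = -(ε a * ((ε b * ε b) * ε c)) := by noncomm_ring
    _ = 0 := by rw [sq0_s8]; noncomm_ring

lemma quadC (a b c : Vsp) : ε a * ε b * ε c * ε c = 0 := by
  calc ε a * ε b * ε c * ε c = ε a * ε b * (ε c * ε c) := by rw [mul_assoc]
    _ = 0 := by rw [sq0_s8]; noncomm_ring

lemma quad0 (a b c x : Vsp) (h : x = a ∨ x = b ∨ x = c) :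
    ε a * ε b * ε c * ε x = 0 := by
  rcases h with h | h | h <;> rw [h]
  exacts [quadA a b c, quadB a b c, quadC a b c]

lemma triple_pair0 (a b c x y : Vsp)
    (h : x = a ∨ x = b ∨ x = c ∨ y = a ∨ y = b ∨ y = c) :
    (ε a * ε b * ε c) * (ε x * ε y) = 0 := by
  rcases h with h | h | h | h | h | h
  · rw [← mul_assoc, quad0 a b c x (Or.inl h), zero_mul]
  · rw [← mul_assoc, quad0 a b c x (Or.inr (Or.inl h)), zero_mul]
  · rw [← mul_assoc, quad0 a b c x (Or.inr (Or.inr h)), zero_mul]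
  · rw [swap x y, mul_neg, ← mul_assoc, quad0 a b c y (Or.inl h), zero_mul, neg_zero]
  · rw [swap x y, mul_neg, ← mul_assoc, quad0 a b c y (Or.inr (Or.inl h)), zero_mul, neg_zero]
  · rw [swap x y, mul_neg, ← mul_assoc, quad0 a b c y (Or.inr (Or.inr h)), zero_mul, neg_zero]

lemma pair_sq0 (u v : Vsp) : (ε u * ε v) * (ε u * ε v) = 0 := by
  calc (ε u * ε v) * (ε u * ε v) = ε u * ((ε v * ε u) * ε v) := by noncomm_ring
    _ = ε u * ((-(ε u * ε v)) * ε v) := by rw [swap v u]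
    _ = -(ε u * ε u) * (ε v * ε v) := by noncomm_ring
    _ = 0 := by rw [sq0_s8]; noncomm_ring

/-- A sum of pairwise commuting square-zero elements, raised to a power
exceeding the number of summands, vanishes. -/
lemma sum_sq_pow_zero {A : Type*} [Ring A] (s : Finset ℕ) (x : ℕ → A)
    (hc : ∀ i ∈ s, ∀ j ∈ s, Commute (x i) (x j))
    (h2 : ∀ i ∈ s, x i * x i = 0) :
    ∀ m, s.card < m → (∑ i ∈ s, x i) ^ m = 0 := by
  induction s using Finset.cons_induction with
  | empty => intro m hm; simp only [Finset.sum_empty]; exact zero_pow (by omega)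
  | cons a s ha ih =>
    intro m hm
    rw [Finset.sum_cons]
    have hcom : Commute (x a) (∑ i ∈ s, x i) :=
      Commute.sum_right _ _ _ fun i hi =>
        hc a (Finset.mem_cons_self a s) i (Finset.mem_cons_of_mem hi)
    rw [hcom.add_pow]
    apply Finset.sum_eq_zero
    intro k hk
    have hcard := Finset.card_cons ha ▸ hm
    have ihc : ∀ i ∈ s, ∀ j ∈ s, Commute (x i) (x j) := fun i hi j hj =>
      hc i (Finset.mem_cons_of_mem hi) j (Finset.mem_cons_of_mem hj)
    have ih2 : ∀ i ∈ s, x i * x i = 0 := fun i hi => h2 i (Finset.mem_cons_of_mem hi)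
    match k with
    | 0 => rw [pow_zero, one_mul, Nat.sub_zero, ih ihc ih2 m (by omega), zero_mul]
    | 1 => rw [ih ihc ih2 (m - 1) (by omega), mul_zero, zero_mul]
    | (k+2) =>
        rw [pow_add, pow_two, h2 a (Finset.mem_cons_self a s), mul_zero, zero_mul, zero_mul]

/-- Key vanishing: a wedge of three generators belonging to three distinct index pairs,
multiplied by ω^(4n-4), vanishes. -/
lemma triple_key (n : ℕ) (hn : 2 ≤ n) (k1 k2 k3 : ℕ)
    (hm1 : 1 ≤ k1) (hm1' : k1 ≤ 4*n-2) (hm2 : 1 ≤ k2) (hm2' : k2 ≤ 4*n-2)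
    (hm3 : 1 ≤ k3) (hm3' : k3 ≤ 4*n-2)
    (h12 : k1 ≠ k2) (h13 : k1 ≠ k3) (h23 : k2 ≠ k3)
    (x1 x2 x3 : Vsp)
    (hx1 : x1 = pl k1 ∨ x1 = pr k1) (hx2 : x2 = pl k2 ∨ x2 = pr k2)
    (hx3 : x3 = pl k3 ∨ x3 = pr k3) :
    (ε x1 * ε x2 * ε x3) *
      (((Complex.I / 2) • ∑ j ∈ Finset.Icc 1 (4 * n - 2), φ j * φb j) ^ (4 * n - 4)) = 0 := by
  set T : ExtA := ε x1 * ε x2 * ε x3 with hT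
  set S : ExtA := ∑ j ∈ Finset.Icc 1 (4 * n - 2), φ j * φb j with hS
  set K : Finset ℕ := {k1, k2, k3} with hK
  set S' : ExtA := ∑ j ∈ Finset.Icc 1 (4 * n - 2) \ K, φ j * φb j with hS'
  have Tp0 : ∀ j, (j = k1 ∨ j = k2 ∨ j = k3) → T * (φ j * φb j) = 0 := by
    intro j hj
    rw [φ_def, φb_def, hT]
    apply triple_pair0
    rcases hj with rfl | rfl | rfl
    · rcases hx1 with h | h
      · exact Or.inl h.symm
      · exact Or.inr (Or.inr (Or.inr (Or.inl h.symm)))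
    · rcases hx2 with h | h
      · exact Or.inr (Or.inl h.symm)
      · exact Or.inr (Or.inr (Or.inr (Or.inr (Or.inl h.symm))))
    · rcases hx3 with h | h
      · exact Or.inr (Or.inr (Or.inl h.symm))
      · exact Or.inr (Or.inr (Or.inr (Or.inr (Or.inr h.symm))))
  have hTS : T * S = T * S' := by
    rw [hS, hS', Finset.mul_sum, Finset.mul_sum]
    refine (Finset.sum_subset Finset.sdiff_subset ?_).symm
    intro j hj hnj
    apply Tp0
    have : j ∈ K := by
      by_contra hjk
      exact hnj (Finset.mem_sdiff.mpr ⟨hj, hjk⟩)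
    simpa [hK] using this
  have hcomm : ∀ a b : ℕ, Commute (φ a * φb a) (φ b * φb b) := by
    intro a b; rw [φ_def, φ_def, φb_def, φb_def]; exact pair_comm_pair _ _ _ _
  have hSS' : Commute S S' := by
    apply Commute.sum_right; intro i _
    apply Commute.sum_left; intro j _
    exact hcomm j i
  have hTm : ∀ m, T * S ^ m = T * S' ^ m := by
    intro m
    induction m with
    | zero => rw [pow_zero, pow_zero]
    | succ m ih =>
      calc T * S ^ (m+1) = T * (S ^ m * S) := by rw [pow_succ]
        _ = (T * S ^ m) * S := (mul_assoc _ _ _).symm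
        _ = (T * S' ^ m) * S := by rw [ih]
        _ = T * (S * S' ^ m) := by rw [mul_assoc, ((hSS'.pow_right m).symm : Commute (S'^m) S).eq]
        _ = (T * S) * S' ^ m := by rw [← mul_assoc]
        _ = (T * S') * S' ^ m := by rw [hTS]
        _ = T * S' ^ (m+1) := by rw [mul_assoc, ← pow_succ']
  have hKcard : K.card = 3 := by
    rw [hK]
    rw [Finset.card_insert_of_notMem (by simp [h12, h13]),
        Finset.card_insert_of_notMem (by simp [h23]), Finset.card_singleton]
  have hKsub : K ⊆ Finset.Icc 1 (4*n-2) := by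
    intro j hj
    simp only [hK, Finset.mem_insert, Finset.mem_singleton] at hj
    rcases hj with rfl | rfl | rfl <;> exact Finset.mem_Icc.mpr (by omega)
  have hcard : (Finset.Icc 1 (4*n-2) \ K).card < 4*n-4 := by
    rw [Finset.card_sdiff_of_subset hKsub, hKcard, Nat.card_Icc]
    omega
  have hS'0 : S' ^ (4*n-4) = 0 := by
    rw [hS']
    exact sum_sq_pow_zero _ _ (fun i _ j _ => hcomm i j)
      (fun i _ => by rw [φ_def, φb_def]; exact pair_sq0 _ _) _ hcard
  rw [smul_pow, mul_smul_comm, hTm, hS'0, mul_zero, smul_zero]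

/-- Structure equations of the Bigalke–Rollenske nilmanifold X^{4n−2}, as hypotheses:
dφʲ = 0 for 1 ≤ j < 3n−1; dφ^{3n−1} = φ^{2n}∧φ̄ⁿ;
dφʲ = φ^{j−3n+1}∧φ^{j−2n+1} + φ^{j−2n}∧φ̄^{j−n} for 3n ≤ j ≤ 4n−2; conjugate relations.

STATEMENT 8: the diagonal metric ω = (i/2)Σφʲ∧φ̄ʲ satisfies d(ω^{4n−3}) = 0. -/
theorem stmt_8 (n : ℕ) (hn : 2 ≤ n) (d : ExtA →ₗ[ℂ] ExtA)
    (hleib : ∀ (v : Vsp) (y : ExtA),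
      d (ExteriorAlgebra.ι ℂ v * y)
        = d (ExteriorAlgebra.ι ℂ v) * y - ExteriorAlgebra.ι ℂ v * d y)
    (hd0 : ∀ j, 1 ≤ j → j < 3 * n - 1 → d (φ j) = 0 ∧ d (φb j) = 0)
    (hd1 : d (φ (3 * n - 1)) = φ (2 * n) * φb n)
    (hd1b : d (φb (3 * n - 1)) = φb (2 * n) * φ n)
    (hd2 : ∀ j, 3 * n ≤ j → j ≤ 4 * n - 2 →
      d (φ j) = φ (j - 3 * n + 1) * φ (j - 2 * n + 1) + φ (j - 2 * n) * φb (j - n) ∧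
      d (φb j) = φb (j - 3 * n + 1) * φb (j - 2 * n + 1) + φb (j - 2 * n) * φ (j - n)) :
    d (((Complex.I / 2) • ∑ j ∈ Finset.Icc 1 (4 * n - 2), φ j * φb j) ^ (4 * n - 3))
      = 0 := by
  have hdpair : ∀ (u v : Vsp) (y : ExtA),
      d (ε u * ε v * y) = d (ε u * ε v) * y + (ε u * ε v) * d y := by
    intro u v y
    rw [mul_assoc, hleib u (ε v * y), hleib v y, hleib u (ε v)]
    noncomm_ring
  set S : ExtA := ∑ j ∈ Finset.Icc 1 (4 * n - 2), φ j * φb j with hS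
  set ω : ExtA := (Complex.I / 2) • S with hω
  -- Leibniz for ω
  have hmul : ∀ y : ExtA, d (ω * y) = d ω * y + ω * d y := by
    intro y
    have hdSy : d (S * y) = d S * y + S * d y := by
      rw [hS, Finset.sum_mul, map_sum, map_sum, Finset.sum_mul]
      calc (∑ j ∈ Finset.Icc 1 (4*n-2), d (φ j * φb j * y))
          = ∑ j ∈ Finset.Icc 1 (4*n-2), (d (φ j * φb j) * y + (φ j * φb j) * d y) :=
            Finset.sum_congr rfl (fun j _ => hdpair _ _ y)
        _ = _ := by rw [Finset.sum_add_distrib, ← Finset.sum_mul, ← Finset.sum_mul]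
    rw [hω, smul_mul_assoc, map_smul, map_smul, hdSy, smul_add, smul_mul_assoc, smul_mul_assoc]
  -- key vanishing
  have key : d ω * ω ^ (4*n-4) = 0 := by
    rw [hω, map_smul, smul_mul_assoc, hS, map_sum, Finset.sum_mul]
    rw [← hS, ← hω]
    have : ∀ j ∈ Finset.Icc 1 (4*n-2), d (φ j * φb j) * ω ^ (4*n-4) = 0 := by
      intro j hj
      rw [Finset.mem_Icc] at hj
      have hdp : d (φ j * φb j) = d (φ j) * φb j - φ j * d (φb j) := hleib _ _
      by_cases h1 : j < 3*n-1
      · obtain ⟨e1, e2⟩ := hd0 j hj.1 h1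
        rw [hdp, e1, e2, zero_mul, mul_zero, sub_zero, zero_mul]
      by_cases h2 : j = 3*n-1
      · subst h2
        rw [hdp, hd1, hd1b]
        have t1 : (φ (2*n) * φb n * φb (3*n-1)) * ω ^ (4*n-4) = 0 :=
          triple_key n hn (2*n) n (3*n-1) (by omega) (by omega) (by omega) (by omega)
            (by omega) (by omega) (by omega) (by omega) (by omega)
            _ _ _ (Or.inl rfl) (Or.inr rfl) (Or.inr rfl)
        have t2 : (φ (3*n-1) * φb (2*n) * φ n) * ω ^ (4*n-4) = 0 :=
          triple_key n hn (3*n-1) (2*n) n (by omega) (by omega) (by omega) (by omega)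
            (by omega) (by omega) (by omega) (by omega) (by omega)
            _ _ _ (Or.inl rfl) (Or.inr rfl) (Or.inl rfl)
        calc (φ (2*n) * φb n * φb (3*n-1) - φ (3*n-1) * (φb (2*n) * φ n)) * ω ^ (4*n-4)
            = (φ (2*n) * φb n * φb (3*n-1)) * ω ^ (4*n-4)
              - (φ (3*n-1) * φb (2*n) * φ n) * ω ^ (4*n-4) := by noncomm_ring
          _ = 0 := by rw [t1, t2, sub_zero]
      · have h3 : 3*n ≤ j := by omega
        obtain ⟨e1, e2⟩ := hd2 j h3 hj.2
        rw [hdp, e1, e2]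
        have t1 : (φ (j-3*n+1) * φ (j-2*n+1) * φb j) * ω ^ (4*n-4) = 0 :=
          triple_key n hn (j-3*n+1) (j-2*n+1) j (by omega) (by omega) (by omega) (by omega)
            (by omega) (by omega) (by omega) (by omega) (by omega)
            _ _ _ (Or.inl rfl) (Or.inl rfl) (Or.inr rfl)
        have t2 : (φ (j-2*n) * φb (j-n) * φb j) * ω ^ (4*n-4) = 0 :=
          triple_key n hn (j-2*n) (j-n) j (by omega) (by omega) (by omega) (by omega)
            (by omega) (by omega) (by omega) (by omega) (by omega)
            _ _ _ (Or.inl rfl) (Or.inr rfl) (Or.inr rfl)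
        have t3 : (φ j * φb (j-3*n+1) * φb (j-2*n+1)) * ω ^ (4*n-4) = 0 :=
          triple_key n hn j (j-3*n+1) (j-2*n+1) (by omega) (by omega) (by omega) (by omega)
            (by omega) (by omega) (by omega) (by omega) (by omega)
            _ _ _ (Or.inl rfl) (Or.inr rfl) (Or.inr rfl)
        have t4 : (φ j * φb (j-2*n) * φ (j-n)) * ω ^ (4*n-4) = 0 :=
          triple_key n hn j (j-2*n) (j-n) (by omega) (by omega) (by omega) (by omega)
            (by omega) (by omega) (by omega) (by omega) (by omega)
            _ _ _ (Or.inl rfl) (Or.inr rfl) (Or.inl rfl)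
        calc ((φ (j-3*n+1) * φ (j-2*n+1) + φ (j-2*n) * φb (j-n)) * φb j
              - φ j * (φb (j-3*n+1) * φb (j-2*n+1) + φb (j-2*n) * φ (j-n))) * ω ^ (4*n-4)
            = (φ (j-3*n+1) * φ (j-2*n+1) * φb j) * ω ^ (4*n-4)
              + (φ (j-2*n) * φb (j-n) * φb j) * ω ^ (4*n-4)
              - ((φ j * φb (j-3*n+1) * φb (j-2*n+1)) * ω ^ (4*n-4)
              + (φ j * φb (j-2*n) * φ (j-n)) * ω ^ (4*n-4)) := by noncomm_ring
          _ = 0 := by rw [t1, t2, t3, t4]; simp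
    rw [Finset.sum_eq_zero this, smul_zero]
  -- commutation of S with d of pairs
  have pairS_comm_triple : ∀ (a b c : Vsp), Commute S (ε a * ε b * ε c) := by
    intro a b c
    rw [hS]
    exact Commute.sum_left _ _ _ (fun j _ => (pair_comm_triple _ _ _ _ _).symm)
  have hcdp : ∀ j ∈ Finset.Icc 1 (4*n-2), Commute S (d (φ j * φb j)) := by
    intro j hj
    rw [Finset.mem_Icc] at hj
    have hdp : d (φ j * φb j) = d (φ j) * φb j - φ j * d (φb j) := hleib _ _
    by_cases h1 : j < 3*n-1
    · obtain ⟨e1, e2⟩ := hd0 j hj.1 h1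
      rw [hdp, e1, e2, zero_mul, mul_zero, sub_zero]
      exact Commute.zero_right S
    by_cases h2 : j = 3*n-1
    · subst h2
      rw [hdp, hd1, hd1b]
      refine Commute.sub_right (pairS_comm_triple _ _ _) ?_
      rw [← mul_assoc]
      exact pairS_comm_triple _ _ _
    · have h3 : 3*n ≤ j := by omega
      obtain ⟨e1, e2⟩ := hd2 j h3 hj.2
      rw [hdp, e1, e2]
      have expand : (φ (j-3*n+1) * φ (j-2*n+1) + φ (j-2*n) * φb (j-n)) * φb j
            - φ j * (φb (j-3*n+1) * φb (j-2*n+1) + φb (j-2*n) * φ (j-n))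
          = (φ (j-3*n+1) * φ (j-2*n+1) * φb j + φ (j-2*n) * φb (j-n) * φb j)
            - (φ j * φb (j-3*n+1) * φb (j-2*n+1) + φ j * φb (j-2*n) * φ (j-n)) := by
        noncomm_ring
      rw [expand]
      exact Commute.sub_right
        (Commute.add_right (pairS_comm_triple _ _ _) (pairS_comm_triple _ _ _))
        (Commute.add_right (pairS_comm_triple _ _ _) (pairS_comm_triple _ _ _))
  have hωcomm : ω * d ω = d ω * ω := by
    have hdS : d S = ∑ j ∈ Finset.Icc 1 (4*n-2), d (φ j * φb j) := by
      conv_lhs => rw [hS]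
      rw [map_sum]
    have h1 : Commute S (d S) := by
      rw [hdS]
      exact Commute.sum_right _ _ _ (fun j hj => hcdp j hj)
    rw [hω, map_smul, smul_mul_assoc, smul_mul_assoc, mul_smul_comm, mul_smul_comm, h1.eq]
  -- power formula
  have hpow2 : ∀ k : ℕ, d (ω ^ (k+1)) = (k+1) • (d ω * ω ^ k) := by
    intro k
    induction k with
    | zero => simp
    | succ k ih =>
      rw [pow_succ' ω (k+1), hmul, ih, mul_smul_comm]
      have h2 : ω * (d ω * ω ^ k) = d ω * ω ^ (k+1) := by
        rw [← mul_assoc, hωcomm, mul_assoc, ← pow_succ']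
      rw [h2, succ_nsmul (d ω * ω ^ (k+1)) (k+1)]
      exact add_comm _ _
  rw [show 4*n-3 = (4*n-4)+1 by omega, hpow2, key, smul_zero]

end
end

section
/- In the Chevalley–Eilenberg algebra of the Bigalke–Rollenske nilmanifold X^{4n−2} (n ≥ 2), the (4n−3,4n−4)-form η₁ := φ¹∧⋯∧(omit φ^{2n−2})∧⋯∧φ^{4n−2} ∧ φ̄¹∧⋯∧(omit φ̄^{3n−2})∧⋯∧φ̄^{4n−3} has differential whose (4n−3,4n−3)-component equals ±φ¹∧⋯∧φ^{4n−3}∧φ̄¹∧⋯∧φ̄^{4n−3}; in particular it is of the form ε·ψ∧ψ̄ with ψ = φ¹∧⋯∧φ^{4n−3} a simple (4n−3,0)-form and ε ∈ {−1,+1}. -/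
/-!
Reorder η₁ as ±φ^{4n−2} ∧ φ̄^{3n−1} ∧ κ, where κ is the wedge of the remaining generators.
Each factor of κ is either closed or has differential a sum of 2-forms ι p ∧ ι q with p another
factor of κ; 2-forms are central and ι p ∧ ι p = 0, so dκ = 0 and
dη₁ = ±(dφ^{4n−2} ∧ φ̄^{3n−1} − φ^{4n−2} ∧ dφ̄^{3n−1}) ∧ κ.
In dφ^{4n−2} = φ^{n−1} ∧ φ^{2n−1} + φ^{2n−2} ∧ φ̄^{3n−2} the first term dies against the factor
φ^{n−1} of κ, while the second supplies exactly the two generators missing from η₁ and gives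
±ψ ∧ ψ̄. The term coming from dφ̄^{3n−1} = φ̄^{2n} ∧ φⁿ has bidegree (4n−2, 4n−4).
-/

noncomputable section

/-- the list [1, …, m] -/
def idx (m : ℕ) : List ℕ := (List.range m).map (· + 1)

/-- the span of forms of bidegree (p,q): products of p generators φ and q generators φ̄ -/
def bidSpan (p q : ℕ) : Submodule ℂ ExtA :=
  Submodule.span ℂ {x | ∃ f : Fin p → ℕ, ∃ g : Fin q → ℕ,
    x = (List.ofFn (φ ∘ f)).prod * (List.ofFn (φb ∘ g)).prod}

namespace ExteriorAlgebra

variable {R M : Type*} [CommRing R] [AddCommGroup M] [Module R M]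

theorem ι_mul_ι_anticomm (x y : M) : ι R x * ι R y = -(ι R y * ι R x) :=
  eq_neg_of_add_eq_zero_left (ι_add_mul_swap x y)

theorem commute_ι_mul_ι (p q : M) (x : ExteriorAlgebra R M) : Commute (ι R p * ι R q) x := by
  induction x using ExteriorAlgebra.induction with
  | algebraMap r => exact Algebra.commutes r _ |>.symm
  | ι w =>
    show ι R p * ι R q * ι R w = ι R w * (ι R p * ι R q)
    rw [mul_assoc, ι_mul_ι_anticomm q w, mul_neg, ← mul_assoc, ι_mul_ι_anticomm p w, neg_mul,
      neg_neg, mul_assoc]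
  | mul a b ha hb => exact ha.mul_right hb
  | add a b ha hb => exact ha.add_right hb

theorem list_prod_map_ι_eq_zero_of_not_nodup {L : List M} (h : ¬L.Nodup) :
    (L.map (ι R)).prod = 0 := by
  rw [← List.ofFn_getElem_eq_map, ← ιMulti_apply]
  exact ιMulti_eq_zero_of_not_inj (mt List.nodup_iff_injective_get.2 h)

theorem list_prod_map_ι_perm {L₁ L₂ : List M} (h : L₁.Perm L₂) :
    ∃ k : ℕ, (L₁.map (ι R)).prod = (-1 : R) ^ k • (L₂.map (ι R)).prod := by
  induction h with
  | nil => exact ⟨0, by simp⟩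
  | cons x _ ih =>
    obtain ⟨k, hk⟩ := ih
    exact ⟨k, by simp [hk]⟩
  | swap x y l =>
    exact ⟨1, by simp [← mul_assoc, ι_mul_ι_anticomm y x]⟩
  | trans _ _ ih₁ ih₂ =>
    obtain ⟨k₁, hk₁⟩ := ih₁
    obtain ⟨k₂, hk₂⟩ := ih₂
    exact ⟨k₁ + k₂, by rw [hk₁, hk₂, smul_smul, pow_add]⟩

variable (R) in
def ιMulιSpan (S : Set M) : Submodule R (ExteriorAlgebra R M) :=
  Submodule.span R {y | ∃ p ∈ S, ∃ q, y = ι R p * ι R q}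

theorem list_prod_mul_mul_list_prod_eq_zero {L₁ L₂ : List M} {y : ExteriorAlgebra R M}
    (hy : y ∈ ιMulιSpan R {p | p ∈ L₁ ++ L₂}) :
    (L₁.map (ι R)).prod * y * (L₂.map (ι R)).prod = 0 := by
  induction hy using Submodule.span_induction with
  | mem y hy =>
    obtain ⟨p, hp, q, rfl⟩ := hy
    rw [← (commute_ι_mul_ι p q _).eq, mul_assoc, ← List.prod_append, ← List.map_append,
      show ι R p * ι R q * ((L₁ ++ L₂).map (ι R)).prod = ((p :: q :: (L₁ ++ L₂)).map (ι R)).prod by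
        simp [mul_assoc]]
    exact list_prod_map_ι_eq_zero_of_not_nodup fun hnd =>
      (List.nodup_cons.1 hnd).1 (List.mem_cons_of_mem q hp)
  | zero => simp
  | add y z _ _ hy hz => rw [mul_add, add_mul, hy, hz, add_zero]
  | smul r y _ hy => rw [mul_smul_comm, smul_mul_assoc, hy, smul_zero]

def OddLeibniz (d : ExteriorAlgebra R M →ₗ[R] ExteriorAlgebra R M) : Prop :=
  ∀ (v : M) (y : ExteriorAlgebra R M), d (ι R v * y) = d (ι R v) * y - ι R v * d y

variable {d : ExteriorAlgebra R M →ₗ[R] ExteriorAlgebra R M}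

theorem OddLeibniz.mul_d_list_prod (hd : OddLeibniz d) (x : ExteriorAlgebra R M) (L : List M)
    (h : ∀ L₁ w L₂, L = L₁ ++ w :: L₂ →
      x * (L₁.map (ι R)).prod * d (ι R w) * (L₂.map (ι R)).prod = 0) :
    x * d (L.map (ι R)).prod = (-1 : R) ^ L.length • (x * (L.map (ι R)).prod * d 1) := by
  induction L generalizing x with
  | nil => simp
  | cons v L ih =>
    have hv : x * d (ι R v) * (L.map (ι R)).prod = 0 := by simpa using h [] v L rfl
    have hL := ih (x * ι R v) fun L₁ w L₂ hL => by
      simpa [mul_assoc] using h (v :: L₁) w L₂ (by rw [hL, List.cons_append])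
    rw [List.map_cons, List.prod_cons, hd, mul_sub, ← mul_assoc, hv, ← mul_assoc, hL,
      List.length_cons, pow_succ]
    simp [mul_assoc]

theorem OddLeibniz.ι_mul_d_one (hd : OddLeibniz d) (v : M) : ι R v * d 1 = 0 := by
  simpa using (hd v 1).symm

theorem OddLeibniz.d_list_prod_eq_zero (hd : OddLeibniz d) {L : List M} (hL : L ≠ [])
    (h : ∀ w ∈ L, d (ι R w) ∈ ιMulιSpan R {p | p ∈ L ∧ p ≠ w}) :
    d (L.map (ι R)).prod = 0 := by
  have hsplit : ∀ L₁ w L₂, L = L₁ ++ w :: L₂ →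
      1 * (L₁.map (ι R)).prod * d (ι R w) * (L₂.map (ι R)).prod = 0 := by
    rintro L₁ w L₂ rfl
    rw [one_mul]
    refine list_prod_mul_mul_list_prod_eq_zero (Submodule.span_mono ?_ (h w (by simp)))
    rintro _ ⟨p, ⟨hp, hpw⟩, q, rfl⟩
    exact ⟨p, by simpa [hpw] using hp, q, rfl⟩
  have hd1 : (L.map (ι R)).prod * d 1 = 0 := by
    rw [← List.dropLast_append_getLast hL, List.map_append, List.prod_append, List.map_singleton,
      List.prod_singleton, mul_assoc, hd.ι_mul_d_one, mul_zero]
  simpa [hd1] using hd.mul_d_list_prod 1 L hsplit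

theorem OddLeibniz.d_ι_mul_ι_mul (hd : OddLeibniz d) {y : ExteriorAlgebra R M} (hy : d y = 0)
    (a b : M) :
    d (ι R a * (ι R b * y)) = d (ι R a) * (ι R b * y) - ι R a * (d (ι R b) * y) := by
  rw [hd, hd, hy, mul_zero, sub_zero]

end ExteriorAlgebra

namespace BigalkeRollenske

open ExteriorAlgebra Sum

def gen (i : ℕ ⊕ ℕ) : Vsp := Finsupp.single i 1

def wedge (L : List (ℕ ⊕ ℕ)) : ExtA := ((L.map gen).map (ι ℂ)).prod

theorem wedge_inl_cons (j : ℕ) (L : List (ℕ ⊕ ℕ)) : wedge (inl j :: L) = φ j * wedge L := rfl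

theorem wedge_inr_cons (j : ℕ) (L : List (ℕ ⊕ ℕ)) : wedge (inr j :: L) = φb j * wedge L := rfl

theorem prod_map_φ_mul_prod_map_φb (A B : List ℕ) :
    (A.map φ).prod * (B.map φb).prod = wedge (A.map inl ++ B.map inr) := by
  simp only [wedge, List.map_append, List.prod_append, List.map_map]
  rfl

theorem wedge_eq_zero_of_not_nodup {L : List (ℕ ⊕ ℕ)} (h : ¬L.Nodup) : wedge L = 0 :=
  list_prod_map_ι_eq_zero_of_not_nodup fun hL => h (hL.of_map gen)

theorem wedge_perm {L₁ L₂ : List (ℕ ⊕ ℕ)} (h : L₁.Perm L₂) :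
    ∃ k : ℕ, wedge L₁ = (-1 : ℂ) ^ k • wedge L₂ :=
  list_prod_map_ι_perm (h.map gen)

theorem wedge_mem_bidSpan_of_perm {L : List (ℕ ⊕ ℕ)} {A B : List ℕ}
    (h : L.Perm (A.map inl ++ B.map inr)) : wedge L ∈ bidSpan A.length B.length := by
  obtain ⟨k, hk⟩ := wedge_perm h
  rw [hk, ← prod_map_φ_mul_prod_map_φb]
  refine Submodule.smul_mem _ _
    (Submodule.subset_span ⟨fun i => A[(i : ℕ)], fun i => B[(i : ℕ)], ?_⟩)
  rw [Function.comp_def, Function.comp_def, List.ofFn_getElem_eq_map A φ,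
    List.ofFn_getElem_eq_map B φb]

theorem map_inl_append_cons_map_inr_perm (A : List ℕ) (b : ℕ) (B : List ℕ) :
    (A.map inl ++ (b :: B).map inr).Perm (inr b :: (A.map inl ++ B.map inr)) := by
  simp [List.perm_middle]

@[simp]
theorem mem_idx {j m : ℕ} : j ∈ idx m ↔ 1 ≤ j ∧ j ≤ m := by
  simp only [idx, List.mem_map, List.mem_range]
  constructor
  · rintro ⟨i, hi, rfl⟩
    omega
  · intro h
    exact ⟨j - 1, by omega, by omega⟩

theorem nodup_idx (m : ℕ) : (idx m).Nodup :=
  List.nodup_range.map fun _ _ => Nat.add_right_cancel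

def holRest (n : ℕ) : List ℕ := (idx (4 * n - 3)).filter (· ≠ 2 * n - 2)

def antiholRest (n : ℕ) : List ℕ :=
  (idx (4 * n - 3)).filter fun j => j ≠ 3 * n - 2 ∧ j ≠ 3 * n - 1

-- The factors of η₁ other than φ^{4n−2} and φ̄^{3n−1}.
def etaRest (n : ℕ) : List (ℕ ⊕ ℕ) := (holRest n).map inl ++ (antiholRest n).map inr

@[simp]
theorem mem_holRest {j n : ℕ} : j ∈ holRest n ↔ 1 ≤ j ∧ j ≤ 4 * n - 3 ∧ j ≠ 2 * n - 2 := by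
  simp [holRest, and_assoc]

@[simp]
theorem mem_antiholRest {j n : ℕ} :
    j ∈ antiholRest n ↔ 1 ≤ j ∧ j ≤ 4 * n - 3 ∧ j ≠ 3 * n - 2 ∧ j ≠ 3 * n - 1 := by
  simp [antiholRest, and_assoc]

theorem nodup_holRest (n : ℕ) : (holRest n).Nodup := (nodup_idx _).filter _

theorem nodup_antiholRest (n : ℕ) : (antiholRest n).Nodup := (nodup_idx _).filter _

@[simp]
theorem inl_mem_etaRest {j n : ℕ} : inl j ∈ etaRest n ↔ j ∈ holRest n := by
  simp [etaRest]

@[simp]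
theorem inr_mem_etaRest {j n : ℕ} : inr j ∈ etaRest n ↔ j ∈ antiholRest n := by
  simp [etaRest]

theorem idx_perm_holRest {n : ℕ} (hn : 2 ≤ n) :
    (idx (4 * n - 3)).Perm ((2 * n - 2) :: holRest n) :=
  (List.perm_ext_iff_of_nodup (nodup_idx _)
    (List.nodup_cons.2 ⟨by simp, nodup_holRest n⟩)).2 fun j => by
      simp only [mem_idx, List.mem_cons, mem_holRest]
      omega

theorem idx_perm_antiholRest {n : ℕ} (hn : 2 ≤ n) :
    (idx (4 * n - 3)).Perm ((3 * n - 2) :: (3 * n - 1) :: antiholRest n) :=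
  (List.perm_ext_iff_of_nodup (nodup_idx _)
    (List.nodup_cons.2 ⟨by simp; omega, List.nodup_cons.2 ⟨by simp, nodup_antiholRest n⟩⟩)).2
    fun j => by
      simp only [mem_idx, List.mem_cons, mem_antiholRest]
      omega

theorem filter_idx_perm_holRest {n : ℕ} (hn : 2 ≤ n) :
    ((idx (4 * n - 2)).filter (· ≠ 2 * n - 2)).Perm ((4 * n - 2) :: holRest n) :=
  (List.perm_ext_iff_of_nodup ((nodup_idx _).filter _)
    (List.nodup_cons.2 ⟨by simp; omega, nodup_holRest n⟩)).2 fun j => by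
      simp only [List.mem_filter, mem_idx, List.mem_cons, mem_holRest, ne_eq, decide_eq_true_eq]
      omega

theorem filter_idx_perm_antiholRest {n : ℕ} (hn : 2 ≤ n) :
    ((idx (4 * n - 3)).filter (· ≠ 3 * n - 2)).Perm ((3 * n - 1) :: antiholRest n) :=
  (List.perm_ext_iff_of_nodup ((nodup_idx _).filter _)
    (List.nodup_cons.2 ⟨by simp, nodup_antiholRest n⟩)).2 fun j => by
      simp only [List.mem_filter, mem_idx, List.mem_cons, mem_antiholRest, ne_eq,
        decide_eq_true_eq]
      omega

theorem eta_perm {n : ℕ} (hn : 2 ≤ n) :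
    (((idx (4 * n - 2)).filter (· ≠ 2 * n - 2)).map inl
        ++ ((idx (4 * n - 3)).filter (· ≠ 3 * n - 2)).map inr).Perm
      (inl (4 * n - 2) :: inr (3 * n - 1) :: etaRest n) :=
  (((filter_idx_perm_holRest hn).map inl).append ((filter_idx_perm_antiholRest hn).map inr)).trans
    ((map_inl_append_cons_map_inr_perm _ _ _).cons _)

theorem psi_perm {n : ℕ} (hn : 2 ≤ n) :
    ((idx (4 * n - 3)).map inl ++ (idx (4 * n - 3)).map inr).Perm
      (inl (2 * n - 2) :: inr (3 * n - 2) :: inr (3 * n - 1) :: etaRest n) :=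
  (((idx_perm_holRest hn).map inl).append ((idx_perm_antiholRest hn).map inr)).trans
    (((map_inl_append_cons_map_inr_perm _ _ _).trans
      ((map_inl_append_cons_map_inr_perm _ _ _).cons _)).cons _)

theorem rho_mem_bidSpan {n : ℕ} (hn : 2 ≤ n) :
    wedge (inl (4 * n - 2) :: inr (2 * n) :: inl n :: etaRest n)
      ∈ bidSpan (4 * n - 2) (4 * n - 4) := by
  have hl := (idx_perm_holRest hn).length_eq
  have hr := (idx_perm_antiholRest hn).length_eq
  simp only [idx, List.length_map, List.length_range, List.length_cons] at hl hr
  have h := wedge_mem_bidSpan_of_perm (A := (4 * n - 2) :: n :: holRest n)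
    (B := (2 * n) :: antiholRest n) ((map_inl_append_cons_map_inr_perm _ _ _).cons _).symm
  rwa [List.length_cons, List.length_cons, List.length_cons,
    show (holRest n).length + 1 + 1 = 4 * n - 2 by omega,
    show (antiholRest n).length + 1 = 4 * n - 4 by omega] at h

theorem ι_gen_mul_mem_ιMulιSpan {K : List (ℕ ⊕ ℕ)} {i k : ℕ ⊕ ℕ} (hk : k ∈ K) (hki : k ≠ i)
    (m : ℕ ⊕ ℕ) :
    ι ℂ (gen k) * ι ℂ (gen m) ∈ ιMulιSpan ℂ {p | p ∈ K.map gen ∧ p ≠ gen i} :=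
  Submodule.subset_span
    ⟨gen k, ⟨List.mem_map_of_mem hk, (Finsupp.single_left_injective one_ne_zero).ne hki⟩, _, rfl⟩

theorem d_wedge_etaRest {n : ℕ} (hn : 2 ≤ n) {d : ExtA →ₗ[ℂ] ExtA} (hleib : OddLeibniz d)
    (hd0 : ∀ j, 1 ≤ j → j < 3 * n - 1 → d (φ j) = 0 ∧ d (φb j) = 0)
    (hd1 : d (φ (3 * n - 1)) = φ (2 * n) * φb n)
    (hd2 : ∀ j, 3 * n ≤ j → j ≤ 4 * n - 2 →
      d (φ j) = φ (j - 3 * n + 1) * φ (j - 2 * n + 1) + φ (j - 2 * n) * φb (j - n) ∧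
      d (φb j) = φb (j - 3 * n + 1) * φb (j - 2 * n + 1) + φb (j - 2 * n) * φ (j - n)) :
    d (wedge (etaRest n)) = 0 := by
  refine hleib.d_list_prod_eq_zero
    (List.ne_nil_of_mem (List.mem_map_of_mem (f := gen) (a := inl 1) (by simp; omega))) ?_
  intro w hw
  obtain ⟨i, hi, rfl⟩ := List.mem_map.1 hw
  have hmem := fun k hk hki m => ι_gen_mul_mem_ιMulιSpan (K := etaRest n) (i := i) (k := k) hk hki m
  rcases i with j | j
  · rw [inl_mem_etaRest, mem_holRest] at hi
    obtain hj | rfl | hj : j < 3 * n - 1 ∨ j = 3 * n - 1 ∨ 3 * n ≤ j := by omega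
    · exact (hd0 j hi.1 hj).1 ▸ zero_mem _
    · exact hd1 ▸ hmem (inl (2 * n)) (by simp; omega) (by simp; omega) _
    · exact (hd2 j hj (by omega)).1 ▸ add_mem (hmem _ (by simp; omega) (by simp; omega) _)
        (hmem _ (by simp; omega) (by simp; omega) _)
  · rw [inr_mem_etaRest, mem_antiholRest] at hi
    obtain hj | hj : j < 3 * n - 1 ∨ 3 * n ≤ j := by omega
    · exact (hd0 j hi.1 hj).2 ▸ zero_mem _
    · exact (hd2 j hj (by omega)).2 ▸ add_mem (hmem _ (by simp; omega) (by simp; omega) _)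
        (hmem _ (by simp; omega) (by simp; omega) _)

end BigalkeRollenske

open ExteriorAlgebra BigalkeRollenske Sum in
/-- Structure equations of the Bigalke–Rollenske nilmanifold X^{4n−2}, as hypotheses:
dφʲ = 0 for 1 ≤ j < 3n−1; dφ^{3n−1} = φ^{2n}∧φ̄ⁿ;
dφʲ = φ^{j−3n+1}∧φ^{j−2n+1} + φ^{j−2n}∧φ̄^{j−n} for 3n ≤ j ≤ 4n−2; conjugate relations.

STATEMENT 10: the (4n−3,4n−4)-form
η₁ = φ¹∧⋯(omit φ^{2n−2})⋯∧φ^{4n−2} ∧ φ̄¹∧⋯(omit φ̄^{3n−2})⋯∧φ̄^{4n−3}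
has dη₁ = ε·ψ∧ψ̄ + ρ with ψ = φ¹∧⋯∧φ^{4n−3} simple, ε ∈ {±1}, and ρ of
bidegree (4n−2,4n−4); i.e. the (4n−3,4n−3)-component of dη₁ is ±ψ∧ψ̄. -/
theorem stmt_10 (n : ℕ) (hn : 2 ≤ n) (d : ExtA →ₗ[ℂ] ExtA)
    (hleib : ∀ (v : Vsp) (y : ExtA),
      d (ExteriorAlgebra.ι ℂ v * y)
        = d (ExteriorAlgebra.ι ℂ v) * y - ExteriorAlgebra.ι ℂ v * d y)
    (hd0 : ∀ j, 1 ≤ j → j < 3 * n - 1 → d (φ j) = 0 ∧ d (φb j) = 0)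
    (hd1 : d (φ (3 * n - 1)) = φ (2 * n) * φb n)
    (hd1b : d (φb (3 * n - 1)) = φb (2 * n) * φ n)
    (hd2 : ∀ j, 3 * n ≤ j → j ≤ 4 * n - 2 →
      d (φ j) = φ (j - 3 * n + 1) * φ (j - 2 * n + 1) + φ (j - 2 * n) * φb (j - n) ∧
      d (φb j) = φb (j - 3 * n + 1) * φb (j - 2 * n + 1) + φb (j - 2 * n) * φ (j - n)) :
    ∃ ε : ℂ, (ε = 1 ∨ ε = -1) ∧ ∃ ρ ∈ bidSpan (4 * n - 2) (4 * n - 4),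
      d ((((idx (4 * n - 2)).filter (· ≠ 2 * n - 2)).map φ).prod
          * (((idx (4 * n - 3)).filter (· ≠ 3 * n - 2)).map φb).prod)
        = ε • (((idx (4 * n - 3)).map φ).prod * ((idx (4 * n - 3)).map φb).prod) + ρ := by
  obtain ⟨k₁, hη⟩ := wedge_perm (eta_perm hn)
  obtain ⟨k₂, hψ⟩ := wedge_perm (psi_perm hn).symm
  have hrest := d_wedge_etaRest hn hleib hd0 hd1 hd2
  have hd4 : d (φ (4 * n - 2)) = φ (n - 1) * φ (2 * n - 1) + φ (2 * n - 2) * φb (3 * n - 2) := by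
    rw [(hd2 _ (by omega) le_rfl).1, show 4 * n - 2 - 3 * n + 1 = n - 1 by omega,
      show 4 * n - 2 - 2 * n + 1 = 2 * n - 1 by omega, show 4 * n - 2 - 2 * n = 2 * n - 2 by omega,
      show 4 * n - 2 - n = 3 * n - 2 by omega]
  have hvanish : wedge (inl (n - 1) :: inl (2 * n - 1) :: inr (3 * n - 1) :: etaRest n) = 0 :=
    wedge_eq_zero_of_not_nodup fun h => by simp at h; omega
  have hdη : d (φ (4 * n - 2) * (φb (3 * n - 1) * wedge (etaRest n)))
      = d (φ (4 * n - 2)) * (φb (3 * n - 1) * wedge (etaRest n))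
        - φ (4 * n - 2) * (d (φb (3 * n - 1)) * wedge (etaRest n)) :=
    OddLeibniz.d_ι_mul_ι_mul hleib hrest _ _
  refine ⟨(-1) ^ (k₁ + k₂), neg_one_pow_eq_or ℂ _,
    -((-1) ^ k₁ • wedge (inl (4 * n - 2) :: inr (2 * n) :: inl n :: etaRest n)),
    neg_mem (Submodule.smul_mem _ _ (rho_mem_bidSpan hn)), ?_⟩
  simp only [wedge_inl_cons, wedge_inr_cons] at hη hψ hvanish ⊢
  rw [prod_map_φ_mul_prod_map_φb, prod_map_φ_mul_prod_map_φb, hη, map_smul, hdη, hd4, hd1b,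
    add_mul]
  simp only [mul_assoc]
  rw [hvanish, zero_add, hψ, smul_sub, smul_smul, ← pow_add, sub_eq_add_neg]

end
end

section
/- Let g be a nilpotent Lie algebra of real dimension 2n with nilpotent complex structure J given by a co-frame φ¹,…,φⁿ with dφⁱ ∈ Λ²⟨φ¹,…,φ^{i−1},φ̄¹,…,φ̄^{i−1}⟩, dφⁱ = 0 for i ≤ k, and dφ^{k+1} ≠ 0. Suppose the (1,1)-part of dφ^{k+1} vanishes, so ∂φ^{k+1} = Σ_{l<m≤k} A_{lm} φˡ∧φᵐ ≠ 0, with A_{ij} ≠ 0 for some i < j ≤ k. Then η := φ¹∧⋯∧(omit φⁱ)∧⋯∧(omit φʲ)∧⋯∧φ^{k+1}∧φ̄¹∧⋯∧φ̄ᵏ satisfies dη = ±A_{ij}·φ¹∧⋯∧φᵏ∧φ̄¹∧⋯∧φ̄ᵏ. -/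
noncomputable section

/-!
Only `∂φ^{k+1}` contributes to `dη`: every other factor of `η` is closed, and the Leibniz rule
moves `d` past the closed factors at the cost of a sign. Multiplying `∑ A_{lm} φˡ∧φᵐ` by the
remaining factors kills every term in which `φˡ` or `φᵐ` already occurs, which leaves only
`A_{ij} φⁱ∧φʲ`; reordering the resulting monomial into `φ¹∧⋯∧φᵏ∧φ̄¹∧⋯∧φ̄ᵏ` costs another sign.
-/

namespace ExteriorAlgebra

variable {R M : Type*} [CommRing R] [AddCommGroup M] [Module R M]

theorem list_prod_map_ι_perm_s14 {L L' : List M} (h : L.Perm L') :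
    ∃ m : ℕ, (L.map (ι R)).prod = (-1 : R) ^ m • (L'.map (ι R)).prod := by
  induction h with
  | nil => exact ⟨0, by simp⟩
  | cons v _ ih =>
    obtain ⟨m, hm⟩ := ih
    exact ⟨m, by simp only [List.map_cons, List.prod_cons, hm, mul_smul_comm]⟩
  | swap v w L =>
    refine ⟨1, ?_⟩
    simp only [List.map_cons, List.prod_cons, ← mul_assoc, pow_one, neg_one_smul, ← neg_mul,
      eq_neg_of_add_eq_zero_left (ι_add_mul_swap (R := R) w v)]
  | trans _ _ ih₁ ih₂ =>
    obtain ⟨m₁, hm₁⟩ := ih₁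
    obtain ⟨m₂, hm₂⟩ := ih₂
    exact ⟨m₁ + m₂, by rw [hm₁, hm₂, smul_smul, pow_add]⟩

variable (d : ExteriorAlgebra R M →ₗ[R] ExteriorAlgebra R M)

theorem map_list_prod_map_ι_mul
    (hleib : ∀ v y, d (ι R v * y) = d (ι R v) * y - ι R v * d y)
    {L : List M} (hL : ∀ v ∈ L, d (ι R v) = 0) (y : ExteriorAlgebra R M) :
    d ((L.map (ι R)).prod * y) = (-1 : R) ^ L.length • ((L.map (ι R)).prod * d y) := by
  induction L with
  | nil => simp
  | cons v L ih =>
    rw [List.forall_mem_cons] at hL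
    simp only [List.map_cons, List.prod_cons, mul_assoc, hleib, hL.1, zero_mul, zero_sub,
      ih hL.2, List.length_cons, pow_succ, mul_smul_comm, mul_smul, neg_one_smul, smul_neg]

theorem map_list_prod_map_ι_eq_zero
    (hleib : ∀ v y, d (ι R v * y) = d (ι R v) * y - ι R v * d y)
    {L : List M} (hne : L ≠ []) (hL : ∀ v ∈ L, d (ι R v) = 0) :
    d ((L.map (ι R)).prod) = 0 := by
  obtain ⟨v, L, rfl⟩ := List.exists_cons_of_ne_nil hne
  induction L generalizing v with
  | nil => simpa using hL v List.mem_cons_self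
  | cons w L ih =>
    rw [List.forall_mem_cons] at hL
    rw [List.map_cons, List.prod_cons, hleib, hL.1, ih w (List.cons_ne_nil w L) hL.2, zero_mul,
      mul_zero, sub_zero]

end ExteriorAlgebra

open ExteriorAlgebra

theorem mem_idx {m l : ℕ} : l ∈ idx m ↔ 1 ≤ l ∧ l ≤ m := by
  simp only [idx, List.mem_map, List.mem_range]
  constructor
  · rintro ⟨a, ha, rfl⟩
    omega
  · rintro ⟨h1, h2⟩
    exact ⟨l - 1, by omega, by omega⟩

theorem nodup_idx (m : ℕ) : (idx m).Nodup :=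
  List.nodup_range.map fun _ _ => Nat.add_right_cancel

theorem mem_filter_idx_ne {k i j l : ℕ} :
    l ∈ (idx k).filter (fun l => l ≠ i ∧ l ≠ j) ↔ 1 ≤ l ∧ l ≤ k ∧ l ≠ i ∧ l ≠ j := by
  simp [mem_idx, and_assoc]

theorem filter_idx_ne_append_perm {k i j : ℕ} (hi1 : 1 ≤ i) (hij : i < j) (hjk : j ≤ k) :
    ((idx k).filter (fun l => l ≠ i ∧ l ≠ j) ++ [i, j]).Perm (idx k) := by
  have hnd : ((idx k).filter (fun l => l ≠ i ∧ l ≠ j) ++ [i, j]).Nodup := by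
    refine List.nodup_append.mpr ⟨(nodup_idx k).filter _, by simp; omega, ?_⟩
    intro a ha b hb
    rw [mem_filter_idx_ne] at ha
    simp only [List.mem_cons, List.not_mem_nil, or_false] at hb
    omega
  refine (List.perm_ext_iff_of_nodup hnd (nodup_idx k)).mpr fun a => ?_
  simp only [List.mem_append, mem_filter_idx_ne, mem_idx, List.mem_cons, List.not_mem_nil,
    or_false]
  omega

def φvec (l : ℕ) : Vsp := Finsupp.single (Sum.inl l) 1
def φbvec (l : ℕ) : Vsp := Finsupp.single (Sum.inr l) 1

theorem list_prod_map_φ (X : List ℕ) : (X.map φ).prod = ((X.map φvec).map (ι ℂ)).prod := by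
  rw [List.map_map]; rfl

theorem list_prod_map_φb (X : List ℕ) : (X.map φb).prod = ((X.map φbvec).map (ι ℂ)).prod := by
  rw [List.map_map]; rfl

theorem list_prod_map_φ_append_pair_eq_zero {F : List ℕ} {l m : ℕ} (h : l ∈ F ∨ m ∈ F) :
    ((F ++ [l, m]).map φ).prod = 0 := by
  rw [list_prod_map_φ]
  refine list_prod_map_ι_eq_zero_of_not_nodup fun hnd => ?_
  have hdisj := (List.nodup_append.mp hnd.of_map).2.2
  rcases h with h | h
  · exact hdisj l h l (by simp) rfl
  · exact hdisj m h m (by simp) rfl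

theorem list_prod_map_φ_mul_sum_mul {F : List ℕ} {k i j : ℕ}
    (hF : ∀ l, l ∈ F ↔ 1 ≤ l ∧ l ≤ k ∧ l ≠ i ∧ l ≠ j)
    (hi1 : 1 ≤ i) (hij : i < j) (hjk : j ≤ k) (A : ℕ → ℕ → ℂ) (Q : ExtA) :
    (F.map φ).prod * ((∑ l ∈ Finset.Icc 1 k, ∑ m ∈ Finset.Icc (l + 1) k, A l m • (φ l * φ m)) * Q)
      = A i j • (((F ++ [i, j]).map φ).prod * Q) := by
  have hterm : ∀ l m, (F.map φ).prod * (A l m • (φ l * φ m) * Q)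
      = A l m • (((F ++ [l, m]).map φ).prod * Q) := by
    intro l m
    simp [mul_assoc]
  have hvanish : ∀ l m, (l ∈ F ∨ m ∈ F) → A l m • (((F ++ [l, m]).map φ).prod * Q) = 0 := by
    intro l m h
    rw [list_prod_map_φ_append_pair_eq_zero h, zero_mul, smul_zero]
  simp_rw [Finset.sum_mul, Finset.mul_sum, hterm]
  rw [Finset.sum_eq_single_of_mem i (by simp; omega),
    Finset.sum_eq_single_of_mem j (by simp; omega)]
  · intro m hm hmj
    simp only [Finset.mem_Icc] at hm
    exact hvanish i m (.inr ((hF m).mpr (by omega)))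
  · intro l hl hli
    refine Finset.sum_eq_zero fun m hm => hvanish l m ?_
    simp only [Finset.mem_Icc] at hl hm
    rw [hF, hF]
    omega

theorem stmt_14_general (k i j : ℕ)
    (hi1 : 1 ≤ i) (hij : i < j) (hjk : j ≤ k)
    (d : ExtA →ₗ[ℂ] ExtA)
    (hleib : ∀ (v : Vsp) (y : ExtA),
      d (ExteriorAlgebra.ι ℂ v * y)
        = d (ExteriorAlgebra.ι ℂ v) * y - ExteriorAlgebra.ι ℂ v * d y)
    (hclosed : ∀ l, 1 ≤ l → l ≤ k → d (φ l) = 0 ∧ d (φb l) = 0)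
    (A : ℕ → ℕ → ℂ)
    (hstruct : d (φ (k + 1))
      = ∑ l ∈ Finset.Icc 1 k, ∑ m ∈ Finset.Icc (l + 1) k, A l m • (φ l * φ m)) :
    ∃ ε : ℂ, (ε = 1 ∨ ε = -1) ∧
      d (((((idx k).filter (fun l => l ≠ i ∧ l ≠ j)) ++ [k + 1]).map φ).prod
          * ((idx k).map φb).prod)
        = (ε * A i j) • (((idx k).map φ).prod * ((idx k).map φb).prod) := by
  set F := (idx k).filter (fun l => l ≠ i ∧ l ≠ j)
  set Q := ((idx k).map φb).prod
  have hF_closed : ∀ v ∈ F.map φvec, d (ι ℂ v) = 0 := by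
    simp only [List.mem_map]
    rintro _ ⟨l, hl, rfl⟩
    exact (hclosed l (mem_filter_idx_ne.mp hl).1 (mem_filter_idx_ne.mp hl).2.1).1
  have hQ : d Q = 0 := by
    rw [show Q = _ from list_prod_map_φb (idx k)]
    refine map_list_prod_map_ι_eq_zero d hleib (by simp [idx]; omega) ?_
    simp only [List.mem_map]
    rintro _ ⟨l, hl, rfl⟩
    exact (hclosed l (mem_idx.mp hl).1 (mem_idx.mp hl).2).2
  obtain ⟨m, hm⟩ := list_prod_map_ι_perm_s14 (R := ℂ) ((filter_idx_ne_append_perm hi1 hij hjk).map φvec)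
  refine ⟨(-1) ^ (F.length + m), neg_one_pow_eq_or ℂ _, ?_⟩
  calc d (((F ++ [k + 1]).map φ).prod * Q)
      = d (((F.map φvec).map (ι ℂ)).prod * (φ (k + 1) * Q)) := by
        rw [List.map_append, List.prod_append, list_prod_map_φ F]
        simp [mul_assoc]
    _ = (-1 : ℂ) ^ F.length • ((F.map φ).prod * (d (φ (k + 1)) * Q)) := by
        rw [map_list_prod_map_ι_mul d hleib hF_closed, φ, hleib, hQ, mul_zero, sub_zero,
          List.length_map, list_prod_map_φ]
    _ = (-1 : ℂ) ^ F.length • A i j • (((F ++ [i, j]).map φ).prod * Q) := by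
        rw [hstruct, list_prod_map_φ_mul_sum_mul (fun _ => mem_filter_idx_ne) hi1 hij hjk]
    _ = ((-1) ^ (F.length + m) * A i j) • (((idx k).map φ).prod * Q) := by
        rw [list_prod_map_φ, hm, ← list_prod_map_φ, smul_mul_assoc, smul_smul, smul_smul, pow_add]
        congr 1
        ring

/-- nilpotent complex structure with dφⁱ = 0 for i ≤ k, vanishing
(1,1)-part of dφ^{k+1} and ∂φ^{k+1} = Σ_{l<m≤k} A_{lm} φˡ∧φᵐ with A_{ij} ≠ 0, i < j ≤ k.
Then η = φ¹∧⋯(omit φⁱ)⋯(omit φʲ)⋯∧φ^{k+1} ∧ φ̄¹∧⋯∧φ̄ᵏ satisfies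
dη = ±A_{ij}·φ¹∧⋯∧φᵏ∧φ̄¹∧⋯∧φ̄ᵏ. -/
theorem stmt_14 (n k i j : ℕ) (hk : 1 ≤ k) (hkn : k + 1 ≤ n)
    (hi1 : 1 ≤ i) (hij : i < j) (hjk : j ≤ k)
    (d : ExtA →ₗ[ℂ] ExtA)
    (hleib : ∀ (v : Vsp) (y : ExtA),
      d (ExteriorAlgebra.ι ℂ v * y)
        = d (ExteriorAlgebra.ι ℂ v) * y - ExteriorAlgebra.ι ℂ v * d y)
    (hclosed : ∀ l, 1 ≤ l → l ≤ k → d (φ l) = 0 ∧ d (φb l) = 0)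
    (A : ℕ → ℕ → ℂ)
    (hstruct : d (φ (k + 1))
      = ∑ l ∈ Finset.Icc 1 k, ∑ m ∈ Finset.Icc (l + 1) k, A l m • (φ l * φ m))
    (hA : A i j ≠ 0) :
    ∃ ε : ℂ, (ε = 1 ∨ ε = -1) ∧
      d (((((idx k).filter (fun l => l ≠ i ∧ l ≠ j)) ++ [k + 1]).map φ).prod
          * ((idx k).map φb).prod)
        = (ε * A i j) • (((idx k).map φ).prod * ((idx k).map φb).prod) :=
  stmt_14_general k i j hi1 hij hjk d hleib hclosed A hstruct

end
end

section
/- Let V be an n-dimensional complex vector space of (1,0)-covectors with basis φ¹,…,φⁿ. If Ω is a transverse real (p,p)-form (meaning Ω∧σ_{n−p}α∧ᾱ is a strictly positive (n,n)-form for every nonzero simple (n−p,0)-form α), and β is any nonzero simple (n−p,0)-form, then Ω∧σ_{n−p}β∧β̄ = c·vol for some real c > 0, where vol = σ_n φ^{1⋯n}∧φ̄^{1⋯n}. In particular, for the form Ω := −φ¹∧φ̄¹∧φ²∧φ̄² − φ¹∧φ̄¹∧φ³∧φ̄³ − φ²∧φ̄²∧φ³∧φ̄³ in dimension n = 3, p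 = 2, Ω is transverse. -/
noncomputable section

/-- σ_p = i^{p²} 2^{-p} -/
def σc (p : ℕ) : ℂ := Complex.I ^ (p ^ 2) / 2 ^ p

open ExteriorAlgebra in
lemma ιswap (x y : Vsp) : ι ℂ y * ι ℂ x = -(ι ℂ x * ι ℂ y) :=
  eq_neg_of_add_eq_zero_right (ι_add_mul_swap (R := ℂ) x y)

lemma sφφ (i j : ℕ) : φ j * φ i = -(φ i * φ j) := ιswap _ _
lemma sφbφb (i j : ℕ) : φb j * φb i = -(φb i * φb j) := ιswap _ _
lemma sφbφ (i k : ℕ) : φb k * φ i = -(φ i * φb k) := ιswap _ _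
lemma sφφ' (i j : ℕ) (x : ExtA) : φ j * (φ i * x) = -(φ i * (φ j * x)) := by
  rw [← mul_assoc, sφφ, neg_mul, mul_assoc]
lemma sφbφb' (i j : ℕ) (x : ExtA) : φb j * (φb i * x) = -(φb i * (φb j * x)) := by
  rw [← mul_assoc, sφbφb, neg_mul, mul_assoc]
lemma sφbφ' (i k : ℕ) (x : ExtA) : φb k * (φ i * x) = -(φ i * (φb k * x)) := by
  rw [← mul_assoc, sφbφ, neg_mul, mul_assoc]
lemma sqφ (i : ℕ) : φ i * φ i = 0 := ExteriorAlgebra.ι_sq_zero _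
lemma sqφb (i : ℕ) : φb i * φb i = 0 := ExteriorAlgebra.ι_sq_zero _
lemma sqφ' (i : ℕ) (x : ExtA) : φ i * (φ i * x) = 0 := by rw [← mul_assoc, sqφ, zero_mul]
lemma sqφb' (i : ℕ) (x : ExtA) : φb i * (φb i * x) = 0 := by rw [← mul_assoc, sqφb, zero_mul]

lemma hidx : ((idx 3).map φ).prod * ((idx 3).map φb).prod
    = φ 1 * (φ 2 * (φ 3 * (φb 1 * (φb 2 * φb 3)))) := by
  simp [idx, List.range_succ, mul_assoc]

lemma hσ1 : σc 1 = Complex.I / 2 := by simp [σc]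
lemma hσ3 : σc 3 = Complex.I / 8 := by
  rw [σc, show (3:ℕ)^2 = 9 from rfl, show (9:ℕ) = 2*4+1 from rfl, pow_succ, pow_mul,
    Complex.I_sq]
  norm_num

lemma key_calc (a b c : ℂ) :
    (-(φ 1 * φb 1 * φ 2 * φb 2) - φ 1 * φb 1 * φ 3 * φb 3 - φ 2 * φb 2 * φ 3 * φb 3)
      * (σc 1 • ((a • φ 1 + b • φ 2 + c • φ 3) *
          ((starRingEnd ℂ a) • φb 1 + (starRingEnd ℂ b) • φb 2 + (starRingEnd ℂ c) • φb 3)))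
    = ((4*(Complex.normSq a + Complex.normSq b + Complex.normSq c) : ℝ) : ℂ) •
        (σc 3 • (((idx 3).map φ).prod * ((idx 3).map φb).prod)) := by
  have hc : ((4*(Complex.normSq a + Complex.normSq b + Complex.normSq c) : ℝ) : ℂ)
      = 4*(a * starRingEnd ℂ a + b * starRingEnd ℂ b + c * starRingEnd ℂ c) := by
    push_cast
    rw [Complex.mul_conj, Complex.mul_conj, Complex.mul_conj]
  rw [hc, hidx, hσ1, hσ3]
  simp only [mul_add, add_mul, mul_assoc, smul_mul_assoc, mul_smul_comm, smul_smul,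
    smul_add, mul_neg, neg_mul, sub_mul, sφφ 1 2, sφφ 1 3, sφφ 2 3, sφφ' 1 2, sφφ' 1 3,
    sφφ' 2 3, sφbφb 1 2, sφbφb 1 3, sφbφb 2 3, sφbφb' 1 2, sφbφb' 1 3, sφbφb' 2 3,
    sφbφ, sφbφ', sqφ, sqφ', sqφb, sqφb', zero_mul, mul_zero, smul_zero, neg_neg,
    neg_zero, add_zero, zero_add, smul_neg]
  module

section
variable (conj : ExtA →+* ExtA)

/-- transversality of a real (p,p)-form Ω in dimension n: Ω∧σ_{n−p}α∧ᾱ is a strictly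
positive multiple of vol = σ_n φ^{1⋯n}∧φ̄^{1⋯n} for every nonzero simple (n−p,0)-form α;
here specialized to n = 3, p = 2, where simple (1,0)-forms are the nonzero elements of
the span of φ¹, φ², φ³. -/
def Transverse32 (Ω : ExtA) : Prop :=
  ∀ α ∈ Submodule.span ℂ {φ 1, φ 2, φ 3}, α ≠ 0 →
    ∃ c : ℝ, 0 < c ∧
      Ω * (σc 1 • (α * conj α))
        = (c : ℂ) • (σc 3 • (((idx 3).map φ).prod * ((idx 3).map φb).prod))

/-- a transverse real (p,p)-form pairs with every nonzero simple
(n−p,0)-form β to a positive multiple of vol; in particular (n = 3, p = 2) the form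
Ω = −φ¹φ̄¹φ²φ̄² − φ¹φ̄¹φ³φ̄³ − φ²φ̄²φ³φ̄³ is transverse. -/
theorem stmt_15
    (hsemi : ∀ (c : ℂ) (x : ExtA), conj (c • x) = (starRingEnd ℂ c) • conj x)
    (hcφ : ∀ j, conj (φ j) = φb j) (hcφb : ∀ j, conj (φb j) = φ j) :
    (∀ Ω : ExtA, Transverse32 conj Ω →
      ∀ β ∈ Submodule.span ℂ {φ 1, φ 2, φ 3}, β ≠ 0 →
        ∃ c : ℝ, 0 < c ∧
          Ω * (σc 1 • (β * conj β))
            = (c : ℂ) • (σc 3 • (((idx 3).map φ).prod * ((idx 3).map φb).prod))) ∧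
    Transverse32 conj
      (-(φ 1 * φb 1 * φ 2 * φb 2) - φ 1 * φb 1 * φ 3 * φb 3
        - φ 2 * φb 2 * φ 3 * φb 3) := by
  constructor
  · exact fun Ω h => h
  · intro β hβ hβ0
    have hmem : ∃ a b c : ℂ, β = a • φ 1 + b • φ 2 + c • φ 3 := by
      rw [Submodule.mem_span_insert] at hβ
      obtain ⟨a, z, hz, rfl⟩ := hβ
      rw [Submodule.mem_span_insert] at hz
      obtain ⟨b, w, hw, rfl⟩ := hz
      rw [Submodule.mem_span_singleton] at hw
      obtain ⟨c, rfl⟩ := hw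
      exact ⟨a, b, c, by rw [add_assoc]⟩
    obtain ⟨a, b, c, rfl⟩ := hmem
    refine ⟨4*(Complex.normSq a + Complex.normSq b + Complex.normSq c), ?_, ?_⟩
    · by_contra h
      apply hβ0
      have ha := Complex.normSq_nonneg a
      have hb := Complex.normSq_nonneg b
      have hc := Complex.normSq_nonneg c
      have ha0 : a = 0 := by rw [← Complex.normSq_eq_zero]; nlinarith
      have hb0 : b = 0 := by rw [← Complex.normSq_eq_zero]; nlinarith
      have hc0 : c = 0 := by rw [← Complex.normSq_eq_zero]; nlinarith
      simp [ha0, hb0, hc0]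
    · have hconj : conj (a • φ 1 + b • φ 2 + c • φ 3)
          = (starRingEnd ℂ a) • φb 1 + (starRingEnd ℂ b) • φb 2 + (starRingEnd ℂ c) • φb 3 := by
        rw [map_add, map_add, hsemi, hsemi, hsemi, hcφ, hcφ, hcφ]
      rw [hconj]
      exact key_calc a b c

end
end
end

section
/- Let Ω be a d-closed element of an exterior differential algebra and η an element with dη = ε·ψ∧ψ̄ where ψ is a simple (n−p,0)-form, ε ∈ {±1}, and suppose Ω is a transverse real (p,p)-form. Then Ω∧dη = ε·Ω∧ψ∧ψ̄ is a nonzero multiple of the volume form, while d(Ω∧η) = Ω∧dη; hence if every d-exact (n,n)-form in the algebra is zero (as holds for invariant forms on a compact nilmanifold by Stokes' theorem / unimodularity), then no such transverse d-closed Ω exists. -/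
noncomputable section

/-- algebraic core of the obstruction lemma. If Ω is a d-closed
transverse real (p,p)-form and dη = ε·ψ∧ψ̄ with ψ a nonzero simple (n−p,0)-form and
ε = ±1, then Ω∧dη = d(Ω∧η) is a nonzero multiple of vol; hence if every d-exact
(n,n)-form vanishes (unimodularity/Stokes), no such Ω can exist. -/
theorem stmt_19 (n p : ℕ) (hp : p < n)
    (d : ExtA →ₗ[ℂ] ExtA) (conj : ExtA →+* ExtA)
    (Ω η ψ : ExtA) (ε : ℂ) (hε : ε = 1 ∨ ε = -1)
    -- ψ is a nonzero simple (n−p,0)-form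
    (hψ : ∃ αs : Fin (n - p) → ExtA,
      (∀ a, αs a ∈ Submodule.span ℂ (φ '' {l | 1 ≤ l ∧ l ≤ n})) ∧
      ψ = (List.ofFn αs).prod)
    (hψne : ψ ≠ 0)
    (hdη : d η = ε • (ψ * conj ψ))
    (hΩclosed : d Ω = 0)
    -- Leibniz rule for the (even-degree) form Ω
    (hleib : d (Ω * η) = d Ω * η + Ω * d η)
    -- Ω is transverse: it pairs positively with every nonzero simple (n−p,0)-form
    (htrans : ∀ α : ExtA,
      (∃ αs : Fin (n - p) → ExtA,
        (∀ a, αs a ∈ Submodule.span ℂ (φ '' {l | 1 ≤ l ∧ l ≤ n})) ∧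
        α = (List.ofFn αs).prod) → α ≠ 0 →
      ∃ c : ℝ, 0 < c ∧
        Ω * (σc (n - p) • (α * conj α))
          = (c : ℂ) • (σc n • (((idx n).map φ).prod * ((idx n).map φb).prod)))
    -- every d-exact (n,n)-form is zero: d-exact forms are never nonzero multiples of vol
    (hexact : ∀ (x : ExtA) (c : ℂ), c ≠ 0 →
      d x ≠ c • (σc n • (((idx n).map φ).prod * ((idx n).map φb).prod))) :
    False := by
  set V : ExtA := σc n • (((idx n).map φ).prod * ((idx n).map φb).prod) with hV
  obtain ⟨c, hc, hEq⟩ := htrans ψ hψ hψne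
  have hσ : σc (n - p) ≠ 0 := by
    unfold σc
    apply div_ne_zero
    · exact pow_ne_zero _ Complex.I_ne_zero
    · exact pow_ne_zero _ two_ne_zero
  have hΩψ : Ω * (ψ * conj ψ) = ((σc (n - p))⁻¹ * c) • V := by
    have h1 : σc (n - p) • (Ω * (ψ * conj ψ)) = (c : ℂ) • V := by
      rw [← hEq, mul_smul_comm]
    have := congrArg (fun z => (σc (n - p))⁻¹ • z) h1
    simpa [smul_smul, inv_mul_cancel₀ hσ, mul_smul] using this
  have hεne : ε ≠ 0 := by rcases hε with h | h <;> simp [h]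
  have hd : d (Ω * η) = (ε * ((σc (n - p))⁻¹ * c)) • V := by
    rw [hleib, hΩclosed, zero_mul, zero_add, hdη, mul_smul_comm, hΩψ,
      smul_smul]
  refine hexact (Ω * η) (ε * ((σc (n - p))⁻¹ * c)) ?_ hd
  apply mul_ne_zero hεne
  apply mul_ne_zero (inv_ne_zero hσ)
  exact_mod_cast hc.ne'

end
end
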